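/- arXiv:math/0609620 — 8 statements merged into one kernel-verified Lean document; each statement's English description precedes it below -/
import Mathlib

section
/- (Theorem 1, upper bound) For every fixed k ≥ 1 and every ε > 0 there exists C > 0 such that limsup over primes q → ∞ of ℙ(Diam(q,k,g) > C·q^(1/k)) is at most ε; equivalently, lim_{C→∞} limsup_{q→∞, q prime} ℙ(Diam(q,k,g) > C·q^(1/k)) = 0. -/
open scoped ENNReal

/-- `Diam q k g` is the least `N : ℕ` such that every `x : ZMod q` can be written as
`x = ∑ j, i j • g j` with `∑ j, i j ≤ N`, and `⊤` if no such `N` exists. -/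
noncomputable def Diam (q k : ℕ) (g : Fin k → ZMod q) : ℕ∞ :=
  sInf ((↑) '' {N : ℕ | ∀ x : ZMod q, ∃ i : Fin k → ℕ,
    (∑ j, i j) ≤ N ∧ x = ∑ j, (i j) • g j})

/-- Probability of the event `p` under the uniform measure on a finite type `α`. -/
noncomputable def Pr (α : Type*) (p : α → Prop) : ℝ :=
  (Nat.card {a // p a} : ℝ) / (Nat.card α : ℝ)

/-!
For `L < q` let `B(g)` be the set of sums `∑ j, i j • g j` with `0 ≤ i j ≤ L`, and `A` the
`(L + 1) ^ k - 1 ≥ L ^ k` nonzero vectors of `(ZMod q)^k` with coordinates in `{0, …, L}`.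
For `x ≠ 0`, the number of `c ∈ A` with `c ⬝ᵥ g = x` has mean `#A / q`, and its second moment is
at most `#A / q + (#A / q) ^ 2`: two distinct `c, c' ∈ A` are either linearly independent, so that
`(c ⬝ᵥ g, c' ⬝ᵥ g)` is uniform on `(ZMod q)^2`, or proportional, and then they cannot both take the
value `x`. The second moment method gives `ℙ(x ∉ B(g)) ≤ q / L ^ k`, and Markov's inequality then
shows that `B(g)` misses at most a quarter of `ZMod q` outside an event of probability `4q / L ^ k`.
If `B(g)` has more than `q / 2` elements then `B(g) + B(g) = ZMod q`, so `Diam ≤ 2kL`.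
For `k ≥ 2` the choice `L = ⌈(4q / ε) ^ (1 / k)⌉` gives, for large `q`, `L < q`,
`L = O(q ^ (1 / k))` and `4q / L ^ k ≤ ε`. For `k = 1`, `Diam ≤ q` unless `g = 0`, which has
probability `1 / q`.
-/

open Finset Filter

theorem AddMonoidHom.card_fiber_mul_card_of_surjective {G H : Type*} [AddGroup G] [Fintype G]
    [AddGroup H] [Fintype H] [DecidableEq H] (f : G →+ H) (hf : Function.Surjective f) (y : H) :
    #{g | f g = y} * Fintype.card H = Fintype.card G := by
  rw [← card_univ (α := G),
    card_eq_sum_card_fiberwise (s := univ) (t := univ) (f := f) fun a _ => mem_univ (f a),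
    sum_congr rfl fun z _ => AddMonoidHom.card_fiber_eq_of_mem_range f (hf z) (hf y),
    sum_const, card_univ, smul_eq_mul, mul_comm]

theorem Matrix.mulVec_surjective_of_linearIndependent_row {F m n : Type*} [Field F] [Fintype m]
    [Fintype n] {A : Matrix m n F} (hA : LinearIndependent F A.row) :
    Function.Surjective A.mulVec := by
  have h : Module.finrank F (LinearMap.range A.mulVecLin) = Module.finrank F (m → F) := by
    rw [← Matrix.rank, hA.rank_matrix, Module.finrank_fintype_fun_eq_card]
  exact LinearMap.range_eq_top.mp (Submodule.eq_top_of_finrank_eq h)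

theorem sq_sum_le_card_filter_ne_zero_mul_sum_sq {α : Type*} (s : Finset α) (f : α → ℕ) :
    (∑ a ∈ s, f a) ^ 2 ≤ #{a ∈ s | f a ≠ 0} * ∑ a ∈ s, f a ^ 2 := by
  rw [← sum_filter_ne_zero]
  calc (∑ a ∈ s with f a ≠ 0, f a) ^ 2
      ≤ #{a ∈ s | f a ≠ 0} * ∑ a ∈ s with f a ≠ 0, f a ^ 2 := sq_sum_le_card_mul_sum_sq
    _ ≤ #{a ∈ s | f a ≠ 0} * ∑ a ∈ s, f a ^ 2 := by
      gcongr
      exact filter_subset _ _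

theorem card_filter_le_mul_le_sum {α : Type*} (s : Finset α) (f : α → ℕ) (n : ℕ) :
    #{a ∈ s | n ≤ f a} * n ≤ ∑ a ∈ s, f a :=
  calc #{a ∈ s | n ≤ f a} * n ≤ ∑ a ∈ s with n ≤ f a, f a := by
        simpa using card_nsmul_le_sum _ f n fun a ha => (mem_filter.mp ha).2
    _ ≤ ∑ a ∈ s, f a := sum_le_sum_of_subset (filter_subset _ _)

section LinearForms

variable {F ι : Type*} [Field F] [Fintype F] [DecidableEq F] [Fintype ι] [DecidableEq ι]

theorem card_forall_dotProduct_eq_mul {m : Type*} [Fintype m] [DecidableEq m] {v : m → ι → F}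
    (hv : LinearIndependent F v) (y : m → F) :
    #{g | ∀ i, v i ⬝ᵥ g = y i} * Fintype.card F ^ Fintype.card m
      = Fintype.card F ^ Fintype.card ι := by
  have h := (Matrix.of v).mulVecLin.toAddMonoidHom.card_fiber_mul_card_of_surjective
    (Matrix.mulVec_surjective_of_linearIndependent_row hv) y
  simp only [Fintype.card_fun] at h
  rw [← h]
  congr 3
  simp [funext_iff, Matrix.mulVec]

theorem card_dotProduct_eq_mul {c : ι → F} (hc : c ≠ 0) (x : F) :
    #{g | c ⬝ᵥ g = x} * Fintype.card F = Fintype.card F ^ Fintype.card ι := by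
  simpa using card_forall_dotProduct_eq_mul (v := fun _ : Unit => c)
    (linearIndependent_unique_iff.mpr hc) fun _ => x

theorem card_dotProduct_eq_and_eq_mul_le {c c' : ι → F} (hc : c ≠ 0) (hcc' : c ≠ c') {x : F}
    (hx : x ≠ 0) :
    #{g | c ⬝ᵥ g = x ∧ c' ⬝ᵥ g = x} * Fintype.card F ^ 2 ≤ Fintype.card F ^ Fintype.card ι := by
  by_cases hind : LinearIndependent F ![c, c']
  · simpa [Fin.forall_fin_two] using (card_forall_dotProduct_eq_mul hind ![x, x]).le
  · obtain ⟨a, rfl⟩ : ∃ a : F, a • c = c' := by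
      simpa [LinearIndependent.pair_iff' hc] using hind
    have ha : a ≠ 1 := by rintro rfl; simp at hcc'
    suffices #{g | c ⬝ᵥ g = x ∧ (a • c) ⬝ᵥ g = x} = 0 by simp only [this, zero_mul, zero_le]
    refine card_eq_zero.mpr (filter_eq_empty_iff.mpr fun g _ ⟨h1, h2⟩ => ha ?_)
    rw [smul_dotProduct, h1, smul_eq_mul] at h2
    exact mul_right_cancel₀ hx (h2.trans (one_mul x).symm)

def dotProductHits (A : Finset (ι → F)) (x : F) (g : ι → F) : ℕ := #{c ∈ A | c ⬝ᵥ g = x}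

variable {A : Finset (ι → F)}

theorem sum_dotProductHits_mul (hA : 0 ∉ A) (x : F) :
    (∑ g, dotProductHits A x g) * Fintype.card F = #A * Fintype.card F ^ Fintype.card ι := by
  simp_rw [dotProductHits, card_filter]
  rw [sum_comm, sum_mul, ← smul_eq_mul, ← sum_const]
  refine sum_congr rfl fun c hc => ?_
  rw [← card_filter]
  exact card_dotProduct_eq_mul (ne_of_mem_of_not_mem hc hA) x

theorem sum_sq_dotProductHits_mul_le (hA : 0 ∉ A) {x : F} (hx : x ≠ 0) :
    (∑ g, dotProductHits A x g ^ 2) * Fintype.card F ^ 2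
      ≤ #A * Fintype.card F ^ (Fintype.card ι + 1) + #A ^ 2 * Fintype.card F ^ Fintype.card ι := by
  set q := Fintype.card F
  have hsum : ∑ g, dotProductHits A x g ^ 2
      = ∑ c ∈ A, ∑ c' ∈ A, #{g | c ⬝ᵥ g = x ∧ c' ⬝ᵥ g = x} := by
    simp_rw [dotProductHits, card_filter, sq, sum_mul_sum, ite_zero_mul_ite_zero, mul_one]
    rw [sum_comm]
    exact sum_congr rfl fun c _ => sum_comm
  have hrow : ∀ c ∈ A, (∑ c' ∈ A, #{g | c ⬝ᵥ g = x ∧ c' ⬝ᵥ g = x}) * q ^ 2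
      ≤ q ^ (Fintype.card ι + 1) + #A * q ^ Fintype.card ι := by
    intro c hc
    have hc0 : c ≠ 0 := ne_of_mem_of_not_mem hc hA
    have hdiag : #{g | c ⬝ᵥ g = x ∧ c ⬝ᵥ g = x} * q ^ 2 = q ^ (Fintype.card ι + 1) := by
      simp_rw [and_self]
      rw [sq, ← mul_assoc, card_dotProduct_eq_mul hc0, pow_succ]
    have hoff : ∀ c' ∈ A.erase c, #{g | c ⬝ᵥ g = x ∧ c' ⬝ᵥ g = x} * q ^ 2 ≤ q ^ Fintype.card ι :=
      fun c' hc' => card_dotProduct_eq_and_eq_mul_le hc0 (ne_of_mem_erase hc').symm hx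
    rw [← add_sum_erase _ _ hc, add_mul, sum_mul, hdiag]
    gcongr
    calc ∑ c' ∈ A.erase c, #{g | c ⬝ᵥ g = x ∧ c' ⬝ᵥ g = x} * q ^ 2
        ≤ #(A.erase c) * q ^ Fintype.card ι := by simpa using sum_le_sum hoff
      _ ≤ #A * q ^ Fintype.card ι := Nat.mul_le_mul_right _ (card_erase_le)
  calc (∑ g, dotProductHits A x g ^ 2) * q ^ 2
      ≤ ∑ _c ∈ A, (q ^ (Fintype.card ι + 1) + #A * q ^ Fintype.card ι) := by
        rw [hsum, sum_mul]; exact sum_le_sum hrow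
    _ = #A * q ^ (Fintype.card ι + 1) + #A ^ 2 * q ^ Fintype.card ι := by
        rw [sum_const, smul_eq_mul]; ring

theorem card_forall_dotProduct_ne_mul_le (hA : 0 ∉ A) {x : F} (hx : x ≠ 0) :
    #{g | ∀ c ∈ A, c ⬝ᵥ g ≠ x} * #A ≤ Fintype.card F ^ (Fintype.card ι + 1) := by
  set q := Fintype.card F
  set N := q ^ Fintype.card ι
  set S₁ := ∑ g, dotProductHits A x g
  set S₂ := ∑ g, dotProductHits A x g ^ 2
  set P := #{g | dotProductHits A x g ≠ 0}
  have hZP : #{g | ∀ c ∈ A, c ⬝ᵥ g ≠ x} + P = N := by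
    have hZ : #{g | ∀ c ∈ A, c ⬝ᵥ g ≠ x} = #{g | ¬ dotProductHits A x g ≠ 0} := by
      congr 1; ext g; simp [dotProductHits, filter_eq_empty_iff]
    rw [hZ, add_comm, card_filter_add_card_filter_not, card_univ, Fintype.card_fun]
  set Z := #{g | ∀ c ∈ A, c ⬝ᵥ g ≠ x}
  have h₁ : S₁ * q = #A * N := sum_dotProductHits_mul hA x
  have h₂ : S₂ * q ^ 2 ≤ #A * q ^ (Fintype.card ι + 1) + #A ^ 2 * N :=
    sum_sq_dotProductHits_mul_le hA hx
  have hCS : S₁ ^ 2 ≤ P * S₂ := sq_sum_le_card_filter_ne_zero_mul_sum_sq univ _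
  rcases (#A).eq_zero_or_pos with hA0 | hA0
  · simp [hA0]
  have hmain : #A * N ≤ P * (q + #A) := by
    refine Nat.le_of_mul_le_mul_right (c := #A * N) ?_ (by positivity)
    calc #A * N * (#A * N) = S₁ ^ 2 * q ^ 2 := by rw [← h₁]; ring
      _ ≤ P * (S₂ * q ^ 2) := by rw [← mul_assoc]; gcongr
      _ ≤ P * (#A * q ^ (Fintype.card ι + 1) + #A ^ 2 * N) := by gcongr
      _ = P * (q + #A) * (#A * N) := by rw [pow_succ]; ring
  have hZ : Z * #A ≤ P * q := by
    rw [← hZP] at hmain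
    nlinarith
  calc Z * #A ≤ P * q := hZ
    _ ≤ N * q := by gcongr; omega
    _ = q ^ (Fintype.card ι + 1) := (pow_succ _ _).symm

end LinearForms

theorem Finset.exists_add_eq_of_card_lt {G : Type*} [AddGroup G] [Fintype G] [DecidableEq G]
    {S : Finset G} (hS : Fintype.card G < 2 * #S) (x : G) : ∃ s ∈ S, ∃ t ∈ S, s + t = x := by
  have hcard : #(S.image (x - ·)) = #S := card_image_of_injective _ sub_right_injective
  obtain ⟨s, hs⟩ := inter_nonempty_of_card_lt_card_add_card (subset_univ S)
    (subset_univ (S.image (x - ·))) (by rw [card_univ, hcard]; omega)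
  obtain ⟨hs, hs'⟩ := mem_inter.mp hs
  obtain ⟨t, ht, rfl⟩ := mem_image.mp hs'
  exact ⟨_, hs, t, ht, sub_add_cancel x t⟩

section BoxSums

variable {G ι : Type*} [AddCommMonoid G] [DecidableEq G] [Fintype ι] [DecidableEq ι]

def boxSums (g : ι → G) (L : ℕ) : Finset G :=
  (Fintype.piFinset fun _ => range (L + 1)).image fun i => ∑ j, i j • g j

theorem mem_boxSums {g : ι → G} {L : ℕ} {x : G} :
    x ∈ boxSums g L ↔ ∃ i : ι → ℕ, (∀ j, i j ≤ L) ∧ ∑ j, i j • g j = x := by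
  simp [boxSums, Fintype.mem_piFinset]

theorem zero_mem_boxSums (g : ι → G) (L : ℕ) : 0 ∈ boxSums g L :=
  mem_boxSums.mpr ⟨0, fun _ => Nat.zero_le L, by simp⟩

end BoxSums

theorem diam_le_of_forall_exists {q k N : ℕ} {g : Fin k → ZMod q}
    (h : ∀ x : ZMod q, ∃ i : Fin k → ℕ, ∑ j, i j ≤ N ∧ x = ∑ j, i j • g j) : Diam q k g ≤ N :=
  sInf_le ⟨N, h, rfl⟩

theorem diam_le_of_ne_zero {q k : ℕ} [Fact q.Prime] {g : Fin k → ZMod q} {j : Fin k}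
    (hj : g j ≠ 0) : Diam q k g ≤ q := by
  refine diam_le_of_forall_exists fun x => ⟨Pi.single j (x / g j).val, ?_, ?_⟩
  · simpa using (ZMod.val_lt _).le
  · rw [sum_eq_single j (fun b _ hb => by simp [Pi.single_eq_of_ne hb]) (by simp)]
    simp [hj]

theorem diam_le_of_card_boxSums {q k L : ℕ} [NeZero q] {g : Fin k → ZMod q}
    (h : q < 2 * #(boxSums g L)) : Diam q k g ≤ (2 * k * L : ℕ) := by
  refine diam_le_of_forall_exists fun x => ?_
  obtain ⟨s, hs, t, ht, rfl⟩ := exists_add_eq_of_card_lt (by rwa [ZMod.card]) x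
  obtain ⟨i, hi, rfl⟩ := mem_boxSums.mp hs
  obtain ⟨i', hi', rfl⟩ := mem_boxSums.mp ht
  have hsum : ∀ i : Fin k → ℕ, (∀ j, i j ≤ L) → ∑ j, i j ≤ k * L := fun i hi => by
    simpa using sum_le_card_nsmul univ i L fun j _ => hi j
  refine ⟨i + i', ?_, by simp [add_mul, sum_add_distrib]⟩
  calc ∑ j, (i + i') j = ∑ j, i j + ∑ j, i' j := sum_add_distrib
    _ ≤ k * L + k * L := add_le_add (hsum i hi) (hsum i' hi')
    _ = 2 * k * L := by ring

section BoxVectors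

variable {q : ℕ} [Fact q.Prime] {ι : Type*} [Fintype ι] [DecidableEq ι] {L : ℕ}

def boxVectors (q : ℕ) (ι : Type*) [Fintype ι] [DecidableEq ι] (L : ℕ) : Finset (ι → ZMod q) :=
  ((Fintype.piFinset fun _ : ι => range (L + 1)).image fun i j => (i j : ZMod q)).erase 0

theorem pow_le_card_boxVectors [Nonempty ι] (hL : L < q) :
    L ^ Fintype.card ι ≤ #(boxVectors q ι L) := by
  have hinj : Set.InjOn (fun (i : ι → ℕ) j => (i j : ZMod q))
      (Fintype.piFinset fun _ : ι => range (L + 1)) := by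
    intro i hi i' hi' h
    simp only [mem_coe, Fintype.mem_piFinset, mem_range] at hi hi'
    funext j
    have := congrFun h j
    rwa [ZMod.natCast_eq_natCast_iff', Nat.mod_eq_of_lt (by grind),
      Nat.mod_eq_of_lt (by grind)] at this
  have hlt : L ^ Fintype.card ι < (L + 1) ^ Fintype.card ι :=
    Nat.pow_lt_pow_left (Nat.lt_succ_self L) Fintype.card_ne_zero
  calc L ^ Fintype.card ι ≤ (L + 1) ^ Fintype.card ι - 1 := by omega
    _ = #((Fintype.piFinset fun _ : ι => range (L + 1)).image fun i j => (i j : ZMod q)) - 1 := by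
      rw [card_image_of_injOn hinj, Fintype.card_piFinset]; simp
    _ ≤ #(boxVectors q ι L) := pred_card_le_card_erase

theorem dotProduct_mem_boxSums {c : ι → ZMod q} (hc : c ∈ boxVectors q ι L) (g : ι → ZMod q) :
    c ⬝ᵥ g ∈ boxSums g L := by
  obtain ⟨-, hc⟩ := mem_erase.mp hc
  obtain ⟨i, hi, rfl⟩ := mem_image.mp hc
  refine mem_boxSums.mpr ⟨i, fun j => ?_, by simp [dotProduct, nsmul_eq_mul]⟩
  simpa [Nat.lt_succ_iff] using Fintype.mem_piFinset.mp hi j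

theorem card_notMem_boxSums_mul_le [Nonempty ι] (hL : L < q) (x : ZMod q) :
    #{g : ι → ZMod q | x ∉ boxSums g L} * L ^ Fintype.card ι ≤ q ^ (Fintype.card ι + 1) := by
  rcases eq_or_ne x 0 with rfl | hx
  · simp [zero_mem_boxSums]
  have hsub : #{g : ι → ZMod q | x ∉ boxSums g L}
      ≤ #{g : ι → ZMod q | ∀ c ∈ boxVectors q ι L, c ⬝ᵥ g ≠ x} := by
    refine card_le_card fun g => ?_
    simp only [mem_filter, mem_univ, true_and]
    exact fun hg c hc hcg => hg (hcg ▸ dotProduct_mem_boxSums hc g)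
  calc #{g : ι → ZMod q | x ∉ boxSums g L} * L ^ Fintype.card ι
      ≤ #{g | ∀ c ∈ boxVectors q ι L, c ⬝ᵥ g ≠ x} * #(boxVectors q ι L) :=
        Nat.mul_le_mul hsub (pow_le_card_boxVectors hL)
    _ ≤ Fintype.card (ZMod q) ^ (Fintype.card ι + 1) :=
        card_forall_dotProduct_ne_mul_le (notMem_erase 0 _) hx
    _ = q ^ (Fintype.card ι + 1) := by rw [ZMod.card]

theorem sum_card_compl_boxSums_mul_le [Nonempty ι] (hL : L < q) :
    (∑ g : ι → ZMod q, #(boxSums g L)ᶜ) * L ^ Fintype.card ι ≤ q ^ (Fintype.card ι + 2) := by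
  have hswap : ∑ g : ι → ZMod q, #(boxSums g L)ᶜ
      = ∑ x : ZMod q, #{g : ι → ZMod q | x ∉ boxSums g L} := by
    have hcompl : ∀ g : ι → ZMod q, #(boxSums g L)ᶜ = #{x | x ∉ boxSums g L} := by
      intro g; congr 1; ext; simp
    simp_rw [hcompl, card_filter]
    exact sum_comm
  calc (∑ g : ι → ZMod q, #(boxSums g L)ᶜ) * L ^ Fintype.card ι
      = ∑ x : ZMod q, #{g : ι → ZMod q | x ∉ boxSums g L} * L ^ Fintype.card ι := by
        rw [hswap, sum_mul]
    _ ≤ ∑ _x : ZMod q, q ^ (Fintype.card ι + 1) :=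
        sum_le_sum fun x _ => card_notMem_boxSums_mul_le hL x
    _ = q ^ (Fintype.card ι + 2) := by
        rw [sum_const, card_univ, ZMod.card, smul_eq_mul, ← pow_succ']

theorem card_filter_le_four_mul_card_compl_boxSums_mul_le [Nonempty ι] (hL : L < q) :
    #{g : ι → ZMod q | q ≤ 4 * #(boxSums g L)ᶜ} * L ^ Fintype.card ι
      ≤ 4 * q ^ (Fintype.card ι + 1) := by
  refine Nat.le_of_mul_le_mul_right ?_ (Fact.out : q.Prime).pos
  calc #{g : ι → ZMod q | q ≤ 4 * #(boxSums g L)ᶜ} * L ^ Fintype.card ι * q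
      = #{g : ι → ZMod q | q ≤ 4 * #(boxSums g L)ᶜ} * q * L ^ Fintype.card ι := by ring
    _ ≤ (∑ g : ι → ZMod q, 4 * #(boxSums g L)ᶜ) * L ^ Fintype.card ι := by
        gcongr; exact card_filter_le_mul_le_sum _ _ _
    _ ≤ 4 * q ^ (Fintype.card ι + 2) := by
        rw [← mul_sum, mul_assoc]; gcongr; exact sum_card_compl_boxSums_mul_le hL
    _ = 4 * q ^ (Fintype.card ι + 1) * q := by ring

end BoxVectors

theorem diam_le_of_four_mul_card_compl_boxSums_lt {q k L : ℕ} [NeZero q] {g : Fin k → ZMod q}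
    (h : 4 * #(boxSums g L)ᶜ < q) : Diam q k g ≤ (2 * k * L : ℕ) := by
  have hcard := card_compl_add_card (boxSums g L)
  rw [ZMod.card] at hcard
  exact diam_le_of_card_boxSums (by omega)

theorem pr_nonneg (α : Type*) (p : α → Prop) : 0 ≤ Pr α p := by
  unfold Pr; positivity

theorem pr_eq_card_filter_div {α : Type*} [Fintype α] (p : α → Prop) [DecidablePred p] :
    Pr α p = #{a | p a} / Fintype.card α := by
  rw [Pr, Nat.card_eq_fintype_card, Nat.card_eq_fintype_card, Fintype.card_subtype]

theorem pr_mono {α : Type*} [Finite α] {p p' : α → Prop} (h : ∀ a, p a → p' a) :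
    Pr α p ≤ Pr α p' := by
  unfold Pr
  gcongr
  exact Nat.card_mono (Set.toFinite _) h

theorem pr_singleton {α : Type*} (a : α) : Pr α (· = a) = 1 / Nat.card α := by
  simp [Pr]

theorem pr_card_lt_diam_le {q k : ℕ} [Fact q.Prime] :
    Pr (Fin k → ZMod q) (fun g => (q : ℕ∞) < Diam q k g) ≤ 1 / q ^ k := by
  have : NeZero q := ⟨(Fact.out : q.Prime).ne_zero⟩
  calc Pr (Fin k → ZMod q) (fun g => (q : ℕ∞) < Diam q k g)
      ≤ Pr (Fin k → ZMod q) (· = 0) := pr_mono fun g hg => by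
        by_contra hg0
        obtain ⟨j, hj⟩ := Function.ne_iff.mp hg0
        exact (diam_le_of_ne_zero hj).not_gt hg
    _ = 1 / q ^ k := by simp [pr_singleton]

theorem pr_ofReal_lt_diam_le {q k N : ℕ} [NeZero q] {z : ℝ} (h : (N : ℝ) ≤ z) :
    Pr (Fin k → ZMod q) (fun g => ENNReal.ofReal z < Diam q k g)
      ≤ Pr (Fin k → ZMod q) (fun g => (N : ℕ∞) < Diam q k g) := by
  refine pr_mono fun g hg => ENat.toENNReal_lt.mp (lt_of_le_of_lt ?_ hg)
  simpa using ENNReal.ofReal_le_ofReal h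

theorem pr_two_mul_lt_diam_le {q k L : ℕ} [Fact q.Prime] (hk : k ≠ 0) (hL : 0 < L) (hLq : L < q) :
    Pr (Fin k → ZMod q) (fun g => ((2 * k * L : ℕ) : ℕ∞) < Diam q k g) ≤ 4 * q / L ^ k := by
  have : Nonempty (Fin k) := ⟨⟨0, Nat.pos_of_ne_zero hk⟩⟩
  have hbad := card_filter_le_four_mul_card_compl_boxSums_mul_le (ι := Fin k) hLq
  rw [Fintype.card_fin] at hbad
  calc Pr (Fin k → ZMod q) (fun g => ((2 * k * L : ℕ) : ℕ∞) < Diam q k g)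
      ≤ Pr (Fin k → ZMod q) (fun g => q ≤ 4 * #(boxSums g L)ᶜ) := pr_mono fun g hg => by
        by_contra h
        exact (diam_le_of_four_mul_card_compl_boxSums_lt (not_le.mp h)).not_gt hg
    _ ≤ 4 * q / L ^ k := by
      have hq : (0 : ℝ) < q := by exact_mod_cast (Fact.out : q.Prime).pos
      rw [pr_eq_card_filter_div, Fintype.card_fun, ZMod.card, Fintype.card_fin, Nat.cast_pow,
        div_le_div_iff₀ (by positivity) (by positivity)]
      have : (#{g : Fin k → ZMod q | q ≤ 4 * #(boxSums g L)ᶜ} : ℝ) * L ^ k ≤ 4 * q ^ (k + 1) := by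
        exact_mod_cast hbad
      rw [pow_succ] at this
      linarith

theorem limsup_primes_le {u : ℕ → ℝ} {ε : ℝ} (hu : ∀ q, 0 ≤ u q)
    (h : ∀ᶠ q in atTop, q.Prime → u q ≤ ε) : limsup u (atTop ⊓ 𝓟 {q | q.Prime}) ≤ ε := by
  have : (atTop ⊓ 𝓟 {q : ℕ | q.Prime}).NeBot :=
    frequently_iff_neBot.mp (Nat.frequently_atTop_iff_infinite.mpr Nat.infinite_setOfPred_prime)
  exact limsup_le_of_le (isCoboundedUnder_le_of_le _ hu) (eventually_inf_principal.mpr h)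

theorem exists_side_length {k : ℕ} (hk : 2 ≤ k) {ε : ℝ} (hε : 0 < ε) :
    ∃ C : ℝ, 0 < C ∧ ∀ᶠ q : ℕ in atTop, ∃ L : ℕ, 0 < L ∧ L < q ∧
      ((2 * k * L : ℕ) : ℝ) ≤ C * (q : ℝ) ^ (k : ℝ)⁻¹ ∧ 4 * q / L ^ k ≤ ε := by
  have hk0 : k ≠ 0 := by omega
  set a := (4 / ε) ^ (k : ℝ)⁻¹
  have ha : 0 < a := by positivity
  refine ⟨2 * k * (a + 1), by positivity, ?_⟩
  have hr : Tendsto (fun q : ℕ => (q : ℝ) ^ (k : ℝ)⁻¹) atTop atTop :=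
    (tendsto_rpow_atTop (by positivity)).comp tendsto_natCast_atTop_atTop
  filter_upwards [hr.eventually_ge_atTop (a + 2)] with q hq
  set r := (q : ℝ) ^ (k : ℝ)⁻¹
  have hr1 : 1 ≤ r := by linarith
  have hrk : r ^ k = q := Real.rpow_inv_natCast_pow (Nat.cast_nonneg q) hk0
  have har : (a * r) ^ k = 4 * q / ε := by
    rw [mul_pow, hrk, Real.rpow_inv_natCast_pow (by positivity) hk0]; ring
  set L := ⌈a * r⌉₊
  have hL₁ : a * r ≤ L := Nat.le_ceil _
  have hL₂ : (L : ℝ) < a * r + 1 := Nat.ceil_lt_add_one (by positivity)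
  refine ⟨L, Nat.ceil_pos.mpr (by positivity), ?_, ?_, ?_⟩
  · have : r ^ 2 ≤ r ^ k := pow_le_pow_right₀ hr1 hk
    exact_mod_cast (show (L : ℝ) < q by nlinarith)
  · push_cast
    nlinarith
  · have hq : (0 : ℝ) < q := by rw [← hrk]; positivity
    have hLk : 4 * q / ε ≤ (L : ℝ) ^ k := har ▸ pow_le_pow_left₀ (by positivity) hL₁ k
    rw [div_le_iff₀ (by positivity)]
    calc (4 : ℝ) * q = 4 * q / ε * ε := by field_simp
      _ ≤ L ^ k * ε := by gcongr
      _ = ε * L ^ k := mul_comm _ _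

/-- Theorem 1 (upper bound): for every `k ≥ 1` and `ε > 0` there is `C > 0` such that
the limsup, over primes `q → ∞`, of the probability (over uniform i.i.d. generators)
that `Diam(q,k,g) > C·q^(1/k)`, is at most `ε`. -/
theorem diam_upper_bound (k : ℕ) (hk : 1 ≤ k) (ε : ℝ) (hε : 0 < ε) :
    ∃ C : ℝ, 0 < C ∧
      Filter.limsup
        (fun q : ℕ => Pr (Fin k → ZMod q)
          (fun g => ENNReal.ofReal (C * (q : ℝ) ^ ((k : ℝ)⁻¹)) < (Diam q k g : ℝ≥0∞)))
        (Filter.atTop ⊓ Filter.principal {q : ℕ | Nat.Prime q}) ≤ ε := by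
  rcases hk.eq_or_lt with rfl | hk
  · refine ⟨1, one_pos, limsup_primes_le (fun _ => pr_nonneg _ _) ?_⟩
    filter_upwards [tendsto_one_div_atTop_nhds_zero_nat.eventually_le_const hε] with q hq hp
    have : Fact q.Prime := ⟨hp⟩
    calc _ ≤ Pr (Fin 1 → ZMod q) (fun g => (q : ℕ∞) < Diam q 1 g) :=
          pr_ofReal_lt_diam_le (by simp)
      _ ≤ 1 / q ^ 1 := pr_card_lt_diam_le
      _ ≤ ε := by simpa using hq
  · obtain ⟨C, hC, hL⟩ := exists_side_length hk hε
    refine ⟨C, hC, limsup_primes_le (fun _ => pr_nonneg _ _) ?_⟩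
    filter_upwards [hL] with q ⟨L, hL0, hLq, hLC, hLε⟩ hp
    have : Fact q.Prime := ⟨hp⟩
    exact (pr_ofReal_lt_diam_le hLC).trans ((pr_two_mul_lt_diam_le (by omega) hL0 hLq).trans hLε)
end

section
/- Let q be prime, k ≥ 1, let x ∈ ZMod q with x ≠ 0, and let L be a natural number with 1 ≤ L ≤ q. For g : Fin k → ZMod q define B(g) = #{ i : Fin k → ℕ | i ≠ 0, i_j < L for all j, and ∑_j i_j • g_j = x }. Then the expectation of B over uniform g equals (L^k − 1)/q. -/
/-- Expectation of `f` under the uniform measure on a finite type `α`. -/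
noncomputable def Exp (α : Type*) (f : α → ℝ) : ℝ :=
  (∑ᶠ a, f a) / (Nat.card α : ℝ)

lemma fiber_card {q k : ℕ} (hq : q.Prime) (c : Fin k → ZMod q) (j0 : Fin k)
    (hc : c j0 ≠ 0) (x : ZMod q) :
    Nat.card {g : Fin k → ZMod q // ∑ j, c j * g j = x} * q = q ^ k := by
  haveI : Fact q.Prime := ⟨hq⟩
  let φ : (Fin k → ZMod q) →+ ZMod q :=
    AddMonoidHom.mk' (fun g => ∑ j, c j * g j)
      (by intro a b; simp [mul_add, Finset.sum_add_distrib])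
  have hsurj : Function.Surjective φ := by
    intro y
    refine ⟨fun j => if j = j0 then (c j0)⁻¹ * y else 0, ?_⟩
    show ∑ j, c j * _ = y
    simp only [mul_ite, mul_zero]
    rw [Finset.sum_ite_eq' Finset.univ j0]
    simp [← mul_assoc, mul_inv_cancel₀ hc]
  obtain ⟨g0, hg0⟩ := hsurj x
  have e : {g : Fin k → ZMod q // ∑ j, c j * g j = x} ≃ φ.ker := by
    refine ⟨fun g => ⟨g.1 - g0, ?_⟩, fun g => ⟨g.1 + g0, ?_⟩, fun g => by simp, fun g => by simp⟩
    · have : φ g.1 = x := g.2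
      simp [AddMonoidHom.mem_ker, map_sub, this, hg0]
    · have : φ g.1 = 0 := g.2
      show φ (g.1 + g0) = x
      simp [map_add, this, hg0]
  rw [Nat.card_congr e]
  have h1 : Nat.card (Fin k → ZMod q) = Nat.card ((Fin k → ZMod q) ⧸ φ.ker) * Nat.card φ.ker :=
    AddSubgroup.card_eq_card_quotient_mul_card_addSubgroup φ.ker
  have h2 : Nat.card ((Fin k → ZMod q) ⧸ φ.ker) = q :=
    (Nat.card_congr (QuotientAddGroup.quotientKerEquivOfSurjective φ hsurj).toEquiv).trans
      (by simp [Nat.card_eq_fintype_card, ZMod.card])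
  have h3 : Nat.card (Fin k → ZMod q) = q ^ k := by
    simp [Nat.card_eq_fintype_card, ZMod.card]
  rw [h2, h3] at h1
  rw [mul_comm]
  exact h1.symm

/-- For `q` prime, `k ≥ 1`, `x ≠ 0` and `1 ≤ L ≤ q`, the expected number of nonzero index
vectors `i : Fin k → ℕ` with all entries `< L` satisfying `∑ j, i j • g j = x`, over
uniform `g : Fin k → ZMod q`, equals `(L^k - 1)/q`. -/
theorem expectation_count (q k : ℕ) (hq : Nat.Prime q) (hk : 1 ≤ k)
    (x : ZMod q) (hx : x ≠ 0) (L : ℕ) (hL1 : 1 ≤ L) (hLq : L ≤ q) :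
    Exp (Fin k → ZMod q)
        (fun g => (Nat.card {i : Fin k → ℕ //
          i ≠ 0 ∧ (∀ j, i j < L) ∧ ∑ j, (i j) • g j = x} : ℝ))
      = ((L : ℝ) ^ k - 1) / (q : ℝ) := by
  classical
  haveI : Fact q.Prime := ⟨hq⟩
  set S : Finset (Fin k → ℕ) := Fintype.piFinset (fun _ => Finset.range L) with hS
  have hpt : ∀ g : Fin k → ZMod q,
      Nat.card {i : Fin k → ℕ // i ≠ 0 ∧ (∀ j, i j < L) ∧ ∑ j, (i j) • g j = x}
        = (S.filter (fun i => i ≠ 0 ∧ ∑ j, (i j) • g j = x)).card := by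
    intro g
    rw [Nat.card_congr (Equiv.subtypeEquivRight (q := fun i =>
        i ∈ S.filter (fun i => i ≠ 0 ∧ ∑ j, (i j) • g j = x)) ?_),
      Nat.card_eq_fintype_card, Fintype.card_coe]
    intro i
    simp only [hS, Finset.mem_filter, Fintype.mem_piFinset, Finset.mem_range]
    tauto
  have hfiber : ∀ i : Fin k → ℕ, i ∈ S → i ≠ 0 →
      (Finset.univ.filter (fun g : Fin k → ZMod q => ∑ j, (i j) • g j = x)).card * q = q ^ k := by
    intro i hi hi0
    obtain ⟨j0, hj0⟩ : ∃ j, i j ≠ 0 := by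
      by_contra h; push_neg at h; exact hi0 (funext fun j => h j)
    have hij : ((i j0 : ZMod q)) ≠ 0 := by
      rw [Ne, ZMod.natCast_eq_zero_iff]
      have hlt : i j0 < q := lt_of_lt_of_le (by
        have := Fintype.mem_piFinset.mp hi j0
        simpa [Finset.mem_range] using this) hLq
      exact Nat.not_dvd_of_pos_of_lt (Nat.pos_of_ne_zero hj0) hlt
    have hf := fiber_card hq (fun j => (i j : ZMod q)) j0 hij x
    rw [← hf]
    congr 1
    rw [Nat.card_eq_fintype_card, Fintype.card_subtype]
    congr 1
    exact Finset.filter_congr fun g _ => by simp [nsmul_eq_mul]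
  have key : (∑ g : Fin k → ZMod q,
      (S.filter (fun i => i ≠ 0 ∧ ∑ j, (i j) • g j = x)).card) * q
        = (L ^ k - 1) * q ^ k := by
    have h1 : ∑ g : Fin k → ZMod q,
        (S.filter (fun i => i ≠ 0 ∧ ∑ j, (i j) • g j = x)).card
          = ∑ i ∈ S, ∑ g : Fin k → ZMod q,
              if i ≠ 0 ∧ ∑ j, (i j) • g j = x then 1 else 0 := by
      simp only [Finset.card_filter]
      exact Finset.sum_comm
    rw [h1, Finset.sum_mul]
    have step : ∀ i ∈ S,
        (∑ g : Fin k → ZMod q, if i ≠ 0 ∧ ∑ j, (i j) • g j = x then 1 else 0) * q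
          = if i ≠ 0 then q ^ k else 0 := by
      intro i hi
      by_cases hi0 : i = 0
      · simp [hi0, Ne, eq_comm (a := x), hx]
      · simp only [hi0, Ne, not_false_iff, if_true]
        rw [← hfiber i hi hi0]
        congr 1
        rw [Finset.card_filter]
        exact Finset.sum_congr rfl fun g _ => by simp [hi0]
    rw [Finset.sum_congr rfl step, ← Finset.sum_filter, Finset.sum_const, smul_eq_mul]
    congr 1
    rw [Finset.filter_ne', Finset.card_erase_of_mem, hS, Fintype.card_piFinset]
    · simp [Finset.card_range]
    · simp only [hS, Fintype.mem_piFinset]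
      intro j
      simpa [Finset.mem_range] using Nat.lt_of_lt_of_le Nat.zero_lt_one hL1
  -- finish in ℝ
  have hq0 : (q : ℝ) ≠ 0 := Nat.cast_ne_zero.mpr hq.pos.ne'
  have hqk : (q : ℝ) ^ k ≠ 0 := pow_ne_zero _ hq0
  have hLk : 1 ≤ L ^ k := Nat.one_le_pow _ _ hL1
  have keyR : (∑ g : Fin k → ZMod q,
      ((S.filter (fun i => i ≠ 0 ∧ ∑ j, (i j) • g j = x)).card : ℝ)) * q
        = ((L : ℝ) ^ k - 1) * (q : ℝ) ^ k := by
    rw [← Nat.cast_sum]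
    have := congrArg (fun n : ℕ => (n : ℝ)) key
    push_cast [Nat.cast_sub hLk] at this ⊢
    exact this
  rw [Exp, finsum_eq_sum_of_fintype]
  simp only [hpt]
  have hcard : (Nat.card (Fin k → ZMod q) : ℝ) = (q : ℝ) ^ k := by
    simp [Nat.card_eq_fintype_card, ZMod.card]
  rw [hcard, div_eq_div_iff hqk hq0]
  exact keyR
end

section
/- Let q be prime, k ≥ 1, let x ∈ ZMod q with x ≠ 0, and let L be a natural number with 2 ≤ L ≤ q. Then the probability, over uniform g : Fin k → ZMod q, that there is NO i : Fin k → ℕ with i_j < L for all j and ∑_j i_j • g_j = x, is at most q/(L^k − 1). -/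
open Finset Module

section Helpers

variable {q k : ℕ}

/-- The linear functional `g ↦ ∑ j, v j * g j`. -/
noncomputable def phi (v : Fin k → ZMod q) : (Fin k → ZMod q) →ₗ[ZMod q] ZMod q :=
  ∑ j, (v j) • LinearMap.proj j

lemma phi_apply (v g : Fin k → ZMod q) : phi v g = ∑ j, v j * g j := by
  simp [phi, LinearMap.sum_apply]

lemma phi_single [NeZero q] (v : Fin k → ZMod q) (j : Fin k) :
    phi v (Pi.single j 1) = v j := by
  rw [phi_apply]; simp [Pi.single_apply, mul_ite, Finset.sum_ite_eq']

lemma phi_surj [Fact q.Prime] {v : Fin k → ZMod q} (hv : v ≠ 0) :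
    Function.Surjective (phi v) := by
  obtain ⟨j, hj⟩ : ∃ j, v j ≠ 0 := by
    by_contra h; push_neg at h; exact hv (funext h)
  intro y
  refine ⟨Pi.single j ((v j)⁻¹ * y), ?_⟩
  rw [phi_apply]
  simp only [Pi.single_apply, mul_ite, mul_zero, Finset.sum_ite_eq', Finset.mem_univ, if_true]
  field_simp

lemma fiber_card_mul {G H : Type*} [AddCommGroup G] [AddCommGroup H] (f : G →+ H) (y : H)
    (g0 : G) (hg0 : f g0 = y) :
    Nat.card {g // f g = y} * Nat.card f.range = Nat.card G := by
  have e1 : {g // f g = y} ≃ f.ker :=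
    { toFun := fun g => ⟨g.1 - g0, by simp [AddMonoidHom.mem_ker, map_sub, g.2, hg0]⟩
      invFun := fun h => ⟨h.1 + g0, by
        have := h.2
        simp only [AddMonoidHom.mem_ker] at this
        simp [map_add, this, hg0]⟩
      left_inv := fun g => by simp
      right_inv := fun h => by simp }
  rw [Nat.card_congr e1, ← Nat.card_congr (QuotientAddGroup.quotientKerEquivRange f).toEquiv,
    mul_comm]
  exact (AddSubgroup.card_eq_card_quotient_mul_card_addSubgroup f.ker).symm

lemma card_fiber_single [Fact q.Prime] {v : Fin k → ZMod q} (hv : v ≠ 0) (y : ZMod q) :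
    Nat.card {g : Fin k → ZMod q // ∑ j, v j * g j = y} * q = q ^ k := by
  have hs := phi_surj hv
  obtain ⟨g0, hg0⟩ := hs y
  have h1 := fiber_card_mul (phi v).toAddMonoidHom y g0 hg0
  have hcr : Nat.card (phi v).toAddMonoidHom.range = q := by
    have e : (phi v).toAddMonoidHom.range ≃ ZMod q :=
      Equiv.subtypeUnivEquiv (fun z => by obtain ⟨g, hg⟩ := hs z; exact ⟨g, hg⟩)
    rw [Nat.card_congr e, Nat.card_zmod]
  have hcongr : Nat.card {g : Fin k → ZMod q // ∑ j, v j * g j = y}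
      = Nat.card {g : Fin k → ZMod q // (phi v).toAddMonoidHom g = y} :=
    Nat.card_congr (Equiv.subtypeEquivRight (fun g => by simp [phi_apply]))
  rw [hcongr]
  calc Nat.card {g : Fin k → ZMod q // (phi v).toAddMonoidHom g = y} * q
      = Nat.card {g : Fin k → ZMod q // (phi v).toAddMonoidHom g = y}
        * Nat.card (phi v).toAddMonoidHom.range := by rw [hcr]
    _ = Nat.card (Fin k → ZMod q) := h1
    _ = q ^ k := by
        rw [Nat.card_fun, Nat.card_zmod, Nat.card_eq_fintype_card, Fintype.card_fin]

lemma pair_surj [Fact q.Prime] {v w : Fin k → ZMod q} (hvw : v ≠ w) {x : ZMod q}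
    (hx : x ≠ 0) (g0 : Fin k → ZMod q) (hg0 : phi v g0 = x ∧ phi w g0 = x) :
    Function.Surjective ((phi v).prod (phi w)) := by
  set f := (phi v).prod (phi w) with hf
  rw [← LinearMap.range_eq_top]
  by_contra hne
  have hlt : LinearMap.range f < ⊤ := lt_of_le_of_ne le_top hne
  have hfr : finrank (ZMod q) (LinearMap.range f) < finrank (ZMod q) (ZMod q × ZMod q) :=
    Submodule.finrank_lt hlt.ne
  have h2 : finrank (ZMod q) (ZMod q × ZMod q) = 2 := by
    rw [Module.finrank_prod, Module.finrank_self]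
  have hxx : ((x, x) : ZMod q × ZMod q) ≠ 0 := by
    intro h; exact hx (congrArg Prod.fst h)
  have hmem : ((x, x) : ZMod q × ZMod q) ∈ LinearMap.range f :=
    ⟨g0, by simp [hf, LinearMap.prod_apply, hg0.1, hg0.2]⟩
  have hspan : (ZMod q ∙ ((x, x) : ZMod q × ZMod q)) ≤ LinearMap.range f :=
    (Submodule.span_singleton_le_iff_mem _ _).2 hmem
  have hrank1 : finrank (ZMod q) (ZMod q ∙ ((x, x) : ZMod q × ZMod q)) = 1 :=
    finrank_span_singleton hxx
  have heq : (ZMod q ∙ ((x, x) : ZMod q × ZMod q)) = LinearMap.range f := by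
    apply Submodule.eq_of_le_of_finrank_le hspan
    omega
  have hall : ∀ g, phi v g = phi w g := by
    intro g
    have hg : f g ∈ LinearMap.range f := ⟨g, rfl⟩
    rw [← heq, Submodule.mem_span_singleton] at hg
    obtain ⟨c, hc⟩ := hg
    have h1 : phi v g = c * x := by
      have := congrArg Prod.fst hc; simpa [hf] using this.symm
    have h2 : phi w g = c * x := by
      have := congrArg Prod.snd hc; simpa [hf] using this.symm
    rw [h1, h2]
  apply hvw
  funext j
  have := hall (Pi.single j 1)
  rwa [phi_single, phi_single] at this

lemma card_fiber_pair [Fact q.Prime] {v w : Fin k → ZMod q} (hvw : v ≠ w) {x : ZMod q}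
    (hx : x ≠ 0) :
    Nat.card {g : Fin k → ZMod q // (∑ j, v j * g j = x) ∧ (∑ j, w j * g j = x)} * q ^ 2
      ≤ q ^ k := by
  set f := ((phi v).prod (phi w)).toAddMonoidHom with hfdef
  have hcongr : Nat.card {g : Fin k → ZMod q // (∑ j, v j * g j = x) ∧ (∑ j, w j * g j = x)}
      = Nat.card {g : Fin k → ZMod q // f g = (x, x)} := by
    apply Nat.card_congr
    refine Equiv.subtypeEquivRight (fun g => ?_)
    simp [hfdef, LinearMap.prod_apply, phi_apply, Prod.ext_iff]
  rw [hcongr]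
  rcases isEmpty_or_nonempty {g : Fin k → ZMod q // f g = (x, x)} with he | hne
  · simp [Nat.card_of_isEmpty]
  · obtain ⟨⟨g0, hg0⟩⟩ := hne
    have hg0' : phi v g0 = x ∧ phi w g0 = x :=
      ⟨congrArg Prod.fst hg0, congrArg Prod.snd hg0⟩
    have hs := pair_surj hvw hx g0 hg0'
    have h1 := fiber_card_mul f (x, x) g0 hg0
    have hcr : Nat.card f.range = q ^ 2 := by
      have e : f.range ≃ (ZMod q × ZMod q) :=
        Equiv.subtypeUnivEquiv (fun z => by obtain ⟨g, hg⟩ := hs z; exact ⟨g, hg⟩)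
      rw [Nat.card_congr e, Nat.card_prod, Nat.card_zmod, sq]
    refine le_of_eq ?_
    calc Nat.card {g : Fin k → ZMod q // f g = (x, x)} * q ^ 2
        = Nat.card {g : Fin k → ZMod q // f g = (x, x)} * Nat.card f.range := by rw [hcr]
      _ = Nat.card (Fin k → ZMod q) := h1
      _ = q ^ k := by
          rw [Nat.card_fun, Nat.card_zmod, Nat.card_eq_fintype_card, Fintype.card_fin]

end Helpers

/-- For `q` prime, `k ≥ 1`, `x ≠ 0` and `2 ≤ L ≤ q`, the probability over uniform
`g : Fin k → ZMod q` that no `i : Fin k → ℕ` with all entries `< L` satisfies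
`∑ j, i j • g j = x` is at most `q/(L^k - 1)`. -/
theorem prob_no_representation (q k : ℕ) (hq : Nat.Prime q) (hk : 1 ≤ k)
    (x : ZMod q) (hx : x ≠ 0) (L : ℕ) (hL2 : 2 ≤ L) (hLq : L ≤ q) :
    Pr (Fin k → ZMod q)
        (fun g => ¬ ∃ i : Fin k → ℕ, (∀ j, i j < L) ∧ ∑ j, (i j) • g j = x)
      ≤ (q : ℝ) / ((L : ℝ) ^ k - 1) := by
  classical
  haveI : Fact q.Prime := ⟨hq⟩
  set S : Finset (Fin k → ZMod q) :=
    univ.filter (fun v => v ≠ 0 ∧ ∀ j, (v j).val < L) with hSdef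
  clear_value S
  set N : (Fin k → ZMod q) → ℕ :=
    (fun g => (S.filter (fun v => ∑ j, v j * g j = x)).card) with hNdef
  clear_value N
  -- event equivalence
  have hevent : ∀ g : Fin k → ZMod q,
      (∃ i : Fin k → ℕ, (∀ j, i j < L) ∧ ∑ j, (i j) • g j = x) ↔ 0 < N g := by
    intro g
    rw [hNdef, Finset.card_pos]
    constructor
    · rintro ⟨i, hiL, hsum⟩
      refine ⟨fun j => ((i j : ℕ) : ZMod q), ?_⟩
      have hsum' : ∑ j, ((i j : ℕ) : ZMod q) * g j = x := by
        rw [← hsum]; exact Finset.sum_congr rfl (fun j _ => (nsmul_eq_mul _ _).symm)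
      simp only [hSdef, Finset.mem_filter, Finset.mem_univ, true_and]
      refine ⟨⟨?_, fun j => ?_⟩, hsum'⟩
      · intro h0
        apply hx
        rw [← hsum']
        apply Finset.sum_eq_zero
        intro j _
        rw [show ((i j : ℕ) : ZMod q) = 0 from congrFun h0 j, zero_mul]
      · rw [ZMod.val_cast_of_lt (lt_of_lt_of_le (hiL j) hLq)]; exact hiL j
    · rintro ⟨v, hv⟩
      simp only [hSdef, Finset.mem_filter, Finset.mem_univ, true_and] at hv
      obtain ⟨⟨hv0, hvL⟩, hsum⟩ := hv
      refine ⟨fun j => (v j).val, hvL, ?_⟩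
      rw [← hsum]
      refine Finset.sum_congr rfl (fun j _ => ?_)
      rw [nsmul_eq_mul, ZMod.natCast_rightInverse (v j)]
  -- cardinality of S
  have hLk1 : 1 ≤ L ^ k := Nat.one_le_pow _ _ (by omega)
  have hcardL : Fintype.card {a : ZMod q // a.val < L} = L := by
    have e : {a : ZMod q // a.val < L} ≃ Fin L :=
      { toFun := fun a => ⟨a.1.val, a.2⟩
        invFun := fun m => ⟨((m : ℕ) : ZMod q), by
          rw [ZMod.val_cast_of_lt (lt_of_lt_of_le m.2 hLq)]; exact m.2⟩
        left_inv := fun a => Subtype.ext (ZMod.natCast_rightInverse a.1)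
        right_inv := fun m => by
          apply Fin.ext
          simp [ZMod.val_cast_of_lt (lt_of_lt_of_le m.2 hLq)] }
    rw [Fintype.card_congr e, Fintype.card_fin]
  have hcardP : (univ.filter (fun v : Fin k → ZMod q => ∀ j, (v j).val < L)).card = L ^ k := by
    rw [← Fintype.card_subtype]
    rw [Fintype.card_congr (Equiv.subtypePiEquivPi
      (p := fun (_ : Fin k) (a : ZMod q) => a.val < L))]
    simp [Fintype.card_pi, hcardL, Finset.prod_const]
  have hScard : S.card = L ^ k - 1 := by
    have h0mem : (0 : Fin k → ZMod q) ∈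
        univ.filter (fun v : Fin k → ZMod q => ∀ j, (v j).val < L) := by
      simp only [Finset.mem_filter, Finset.mem_univ, true_and]
      intro j
      simp only [Pi.zero_apply, ZMod.val_zero]
      exact lt_of_lt_of_le (by norm_num) hL2
    have hS : S = (univ.filter (fun v : Fin k → ZMod q => ∀ j, (v j).val < L)).erase 0 := by
      ext v
      simp only [hSdef, Finset.mem_filter, Finset.mem_univ, true_and, Finset.mem_erase]
    rw [hS, Finset.card_erase_of_mem h0mem, hcardP]
  have h2k : 2 ≤ L ^ k :=
    le_trans hL2 (Nat.le_self_pow (Nat.one_le_iff_ne_zero.mp hk) L)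
  have hSpos : 1 ≤ S.card := by
    rw [hScard]
    exact Nat.le_sub_one_of_lt (lt_of_lt_of_le one_lt_two h2k)
  -- first moment
  have hfiber1 : ∀ v ∈ S,
      (univ.filter (fun g : Fin k → ZMod q => ∑ j, v j * g j = x)).card * q = q ^ k := by
    intro v hv
    rw [hSdef] at hv
    have hv0 : v ≠ 0 := ((Finset.mem_filter.1 hv).2).1
    have h := card_fiber_single (k := k) hv0 x
    rwa [Nat.card_eq_fintype_card, Fintype.card_subtype] at h
  have hsum1 : (∑ g : Fin k → ZMod q, N g) * q = S.card * q ^ k := by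
    have hswap : ∑ g : Fin k → ZMod q, N g
        = ∑ v ∈ S, (univ.filter (fun g : Fin k → ZMod q => ∑ j, v j * g j = x)).card := by
      simp only [hNdef, Finset.card_filter]
      exact Finset.sum_comm
    rw [hswap, Finset.sum_mul, Finset.sum_congr rfl hfiber1, Finset.sum_const, smul_eq_mul]
  -- second moment
  have hfiber2 : ∀ v ∈ S, ∀ w ∈ S, v ≠ w →
      (univ.filter (fun g : Fin k → ZMod q =>
        (∑ j, v j * g j = x) ∧ (∑ j, w j * g j = x))).card * q ^ 2 ≤ q ^ k := by
    intro v _ w _ hvw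
    have h := card_fiber_pair (k := k) hvw hx
    rwa [Nat.card_eq_fintype_card, Fintype.card_subtype] at h
  set C : (Fin k → ZMod q) → (Fin k → ZMod q) → ℕ := fun v w =>
    (univ.filter (fun g : Fin k → ZMod q =>
      (∑ j, v j * g j = x) ∧ (∑ j, w j * g j = x))).card with hCdef
  clear_value C
  have hsum2 : (∑ g : Fin k → ZMod q, N g ^ 2) * q ^ 2
      ≤ S.card * (q ^ k * q) + S.card * (S.card * q ^ k) := by
    have hexp : ∑ g : Fin k → ZMod q, N g ^ 2 = ∑ v ∈ S, ∑ w ∈ S, C v w := by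
      have h1 : ∀ g, N g ^ 2 = ∑ v ∈ S, ∑ w ∈ S,
          (if (∑ j, v j * g j = x) ∧ (∑ j, w j * g j = x) then 1 else 0) := by
        intro g
        rw [sq, hNdef]
        simp only [Finset.card_filter]
        rw [Finset.sum_mul_sum]
        refine Finset.sum_congr rfl (fun v _ => Finset.sum_congr rfl (fun w _ => ?_))
        by_cases h1 : (∑ j, v j * g j = x) <;> by_cases h2 : (∑ j, w j * g j = x) <;>
          simp [h1, h2]
      simp only [h1]
      rw [Finset.sum_comm]
      refine Finset.sum_congr rfl (fun v _ => ?_)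
      rw [Finset.sum_comm]
      refine Finset.sum_congr rfl (fun w _ => ?_)
      simp only [hCdef, Finset.card_filter]
    have key : ∀ v ∈ S, (∑ w ∈ S, C v w) * q ^ 2 ≤ q ^ k * q + S.card * q ^ k := by
      intro v hv
      rw [← Finset.add_sum_erase S (C v) hv, add_mul]
      have hdiag : C v v * q ^ 2 = q ^ k * q := by
        have hCvv : C v v = (univ.filter
            (fun g : Fin k → ZMod q => ∑ j, v j * g j = x)).card := by
          simp only [hCdef, and_self]
        rw [hCvv, sq, ← mul_assoc, hfiber1 v hv]
      have hoff : (∑ w ∈ S.erase v, C v w) * q ^ 2 ≤ S.card * q ^ k := by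
        rw [Finset.sum_mul]
        calc ∑ w ∈ S.erase v, C v w * q ^ 2 ≤ ∑ _w ∈ S.erase v, q ^ k := by
              refine Finset.sum_le_sum (fun w hw => ?_)
              have h := hfiber2 v hv w (Finset.mem_of_mem_erase hw)
                (Ne.symm (Finset.mem_erase.1 hw).1)
              simpa only [hCdef] using h
          _ = (S.erase v).card * q ^ k := by rw [Finset.sum_const, smul_eq_mul]
          _ ≤ S.card * q ^ k := by
              exact Nat.mul_le_mul_right _ (Finset.card_le_card (Finset.erase_subset _ _))
      rw [hdiag]
      exact Nat.add_le_add_left hoff _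
    calc (∑ g : Fin k → ZMod q, N g ^ 2) * q ^ 2
        = ∑ v ∈ S, (∑ w ∈ S, C v w) * q ^ 2 := by rw [hexp, Finset.sum_mul]
      _ ≤ ∑ _v ∈ S, (q ^ k * q + S.card * q ^ k) := Finset.sum_le_sum key
      _ = S.card * (q ^ k * q + S.card * q ^ k) := by rw [Finset.sum_const, smul_eq_mul]
      _ = S.card * (q ^ k * q) + S.card * (S.card * q ^ k) := by ring
  -- Cauchy–Schwarz
  set B : Finset (Fin k → ZMod q) := univ.filter (fun g => 0 < N g) with hBdef
  clear_value B
  have hres0 : ∀ g : Fin k → ZMod q, g ∉ B → N g = 0 := by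
    intro g hg
    rw [hBdef, Finset.mem_filter] at hg
    have : ¬ 0 < N g := fun h => hg ⟨Finset.mem_univ g, h⟩
    exact Nat.eq_zero_of_not_pos this
  have hB1 : ∑ g ∈ B, (N g : ℝ) = ∑ g : Fin k → ZMod q, (N g : ℝ) :=
    Finset.sum_subset (Finset.subset_univ _) (fun g _ hg => by rw [hres0 g hg]; norm_num)
  have hB2 : ∑ g ∈ B, (N g : ℝ) ^ 2 = ∑ g : Fin k → ZMod q, (N g : ℝ) ^ 2 :=
    Finset.sum_subset (Finset.subset_univ _) (fun g _ hg => by rw [hres0 g hg]; norm_num)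
  have hCS : (∑ g : Fin k → ZMod q, (N g : ℝ)) ^ 2
      ≤ (B.card : ℝ) * ∑ g : Fin k → ZMod q, (N g : ℝ) ^ 2 := by
    rw [← hB1, ← hB2]
    exact sq_sum_le_card_mul_sum_sq
  -- cardinalities
  have hcardU : Fintype.card (Fin k → ZMod q) = q ^ k := by
    simp [Fintype.card_pi, ZMod.card, Finset.prod_const]
  have hBle : B.card ≤ q ^ k := by
    rw [← hcardU, ← Finset.card_univ]
    exact Finset.card_le_univ B
  have hbad : Nat.card {g : Fin k → ZMod q //
      ¬ ∃ i : Fin k → ℕ, (∀ j, i j < L) ∧ ∑ j, (i j) • g j = x} = q ^ k - B.card := by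
    rw [Nat.card_eq_fintype_card, Fintype.card_subtype]
    have hfilt : univ.filter (fun g : Fin k → ZMod q =>
        ¬ ∃ i : Fin k → ℕ, (∀ j, i j < L) ∧ ∑ j, (i j) • g j = x) = univ \ B := by
      ext g
      simp only [Finset.mem_filter, Finset.mem_univ, true_and, Finset.mem_sdiff, hBdef]
      rw [hevent g]
    rw [hfilt, Finset.card_sdiff_of_subset (Finset.subset_univ _), Finset.card_univ, hcardU]
  -- real arithmetic
  have hq0 : (0:ℝ) < (q:ℝ) := by exact_mod_cast hq.pos
  have hMr : ((S.card : ℕ) : ℝ) = (L:ℝ) ^ k - 1 := by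
    rw [hScard, Nat.cast_sub hLk1]
    push_cast
    ring
  have hMpos : (0:ℝ) < (S.card : ℝ) := by exact_mod_cast lt_of_lt_of_le one_pos hSpos
  have h1R : (∑ g : Fin k → ZMod q, (N g : ℝ)) * (q:ℝ) = (S.card:ℝ) * (q:ℝ)^k := by
    have := congrArg (Nat.cast : ℕ → ℝ) hsum1
    push_cast at this
    exact this
  have h2R : (∑ g : Fin k → ZMod q, (N g : ℝ)^2) * (q:ℝ)^2
      ≤ (S.card:ℝ) * ((q:ℝ)^k * (q:ℝ)) + (S.card:ℝ) * ((S.card:ℝ) * (q:ℝ)^k) := by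
    have := (Nat.cast_le (α := ℝ)).2 hsum2
    push_cast at this
    exact this
  have hkey : (S.card:ℝ) * (q:ℝ)^k ≤ (B.card:ℝ) * ((q:ℝ) + (S.card:ℝ)) := by
    have hpos : (0:ℝ) < (S.card:ℝ) * (q:ℝ)^k := by positivity
    have hchain : ((S.card:ℝ) * (q:ℝ)^k) * ((S.card:ℝ) * (q:ℝ)^k)
        ≤ ((B.card:ℝ) * ((q:ℝ) + (S.card:ℝ))) * ((S.card:ℝ) * (q:ℝ)^k) := by
      calc ((S.card:ℝ) * (q:ℝ)^k) * ((S.card:ℝ) * (q:ℝ)^k)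
          = ((∑ g : Fin k → ZMod q, (N g : ℝ)) * (q:ℝ))^2 := by rw [h1R]; ring
        _ = (∑ g : Fin k → ZMod q, (N g : ℝ))^2 * (q:ℝ)^2 := by ring
        _ ≤ ((B.card : ℝ) * ∑ g : Fin k → ZMod q, (N g : ℝ) ^ 2) * (q:ℝ)^2 :=
            mul_le_mul_of_nonneg_right hCS (by positivity)
        _ = (B.card : ℝ) * ((∑ g : Fin k → ZMod q, (N g : ℝ) ^ 2) * (q:ℝ)^2) := by ring
        _ ≤ (B.card : ℝ) * ((S.card:ℝ) * ((q:ℝ)^k * (q:ℝ))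
              + (S.card:ℝ) * ((S.card:ℝ) * (q:ℝ)^k)) :=
            mul_le_mul_of_nonneg_left h2R (Nat.cast_nonneg _)
        _ = ((B.card:ℝ) * ((q:ℝ) + (S.card:ℝ))) * ((S.card:ℝ) * (q:ℝ)^k) := by ring
    exact le_of_mul_le_mul_right hchain hpos
  -- conclude
  show ((Nat.card {g : Fin k → ZMod q //
      ¬ ∃ i : Fin k → ℕ, (∀ j, i j < L) ∧ ∑ j, (i j) • g j = x}) : ℝ)
      / ((Nat.card (Fin k → ZMod q)) : ℝ) ≤ (q : ℝ) / ((L : ℝ) ^ k - 1)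
  rw [hbad]
  have hden : ((Nat.card (Fin k → ZMod q)) : ℝ) = (q:ℝ)^k := by
    rw [Nat.card_eq_fintype_card, hcardU]
    push_cast
    ring
  have hnum : ((q ^ k - B.card : ℕ) : ℝ) = (q:ℝ)^k - (B.card:ℝ) := by
    rw [Nat.cast_sub hBle]
    push_cast
    ring
  rw [hden, hnum, ← hMr]
  rw [div_le_div_iff₀ (by positivity) hMpos]
  have hQM : (0:ℝ) < (q:ℝ) + (S.card:ℝ) := by positivity
  nlinarith [hkey, mul_le_mul_of_nonneg_left hkey hMpos.le, hQM, hq0, hMpos,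
    pow_pos hq0 k, mul_pos (mul_pos hq0 hq0) (pow_pos hq0 k),
    Nat.cast_nonneg (α := ℝ) B.card]
end

section
/- Let q be prime, k ≥ 1, and let L be a natural number with 2 ≤ L ≤ q. For g : Fin k → ZMod q let T_L(g) = { x ∈ ZMod q | ∃ i : Fin k → ℕ, i_j < L for all j, and x = ∑_j i_j • g_j }. Then ℙ(|T_L(g)| > q/2) ≥ 1 − 2q/(L^k − 1), where ℙ is over uniform g. -/
open Finset Fintype Matrix

theorem one_sub_le_Pr {α : Type*} [Fintype α] [Nonempty α] (p : α → Prop) [DecidablePred p]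
    {ε : ℝ} (h : #{a | ¬p a} ≤ ε * card α) : 1 - ε ≤ Pr α p := by
  have hα : (0 : ℝ) < card α := by exact_mod_cast Fintype.card_pos
  have hsplit : (#{a | p a} : ℝ) + #{a | ¬p a} = card α := by
    exact_mod_cast card_filter_add_card_filter_not p
  rw [Pr, Nat.card_eq_fintype_card, Nat.card_eq_fintype_card, Fintype.card_subtype,
    le_div_iff₀ hα]
  linarith

theorem card_filter_le_mul_le_sum_s9 {Ω : Type*} [Fintype Ω] (f : Ω → ℕ) (t : ℕ) :
    #{ω | t ≤ f ω} * t ≤ ∑ ω, f ω :=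
  calc #{ω | t ≤ f ω} * t ≤ ∑ ω ∈ {ω | t ≤ f ω}, f ω := by
        rw [← smul_eq_mul]; exact card_nsmul_le_sum _ _ _ fun ω hω => (mem_filter.mp hω).2
    _ ≤ ∑ ω, f ω := sum_le_sum_of_subset (subset_univ _)

theorem sq_sum_le_card_filter_ne_zero_mul_sum_sq_s9 {Ω : Type*} [Fintype Ω] (f : Ω → ℝ) :
    (∑ ω, f ω) ^ 2 ≤ #{ω | f ω ≠ 0} * ∑ ω, f ω ^ 2 :=
  calc (∑ ω, f ω) ^ 2 = (∑ ω ∈ {ω | f ω ≠ 0}, f ω) ^ 2 := by rw [sum_filter_ne_zero]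
    _ ≤ #{ω | f ω ≠ 0} * ∑ ω ∈ {ω | f ω ≠ 0}, f ω ^ 2 := sq_sum_le_card_mul_sum_sq
    _ ≤ #{ω | f ω ≠ 0} * ∑ ω, f ω ^ 2 :=
        mul_le_mul_of_nonneg_left (sum_le_univ_sum_of_nonneg fun ω => sq_nonneg (f ω))
          (Nat.cast_nonneg _)

section SecondMoment

variable {Ω ι : Type*} [DecidableEq Ω] (S : Finset ι) (E : ι → Finset Ω)

def hitCount (ω : Ω) : ℕ := #{i ∈ S | ω ∈ E i}

theorem hitCount_eq_zero_iff {ω : Ω} : hitCount S E ω = 0 ↔ ∀ i ∈ S, ω ∉ E i := by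
  simp [hitCount, filter_eq_empty_iff]

variable [Fintype Ω]

theorem sum_hitCount : ∑ ω, hitCount S E ω = ∑ i ∈ S, #(E i) := by
  simp only [hitCount, card_filter]
  rw [sum_comm]
  simp

theorem sum_hitCount_sq : ∑ ω, hitCount S E ω ^ 2 = ∑ i ∈ S, ∑ j ∈ S, #(E i ∩ E j) := by
  simp only [hitCount, card_filter, sq, Finset.sum_mul_sum, ite_zero_mul_ite_zero, mul_one,
    ← mem_inter]
  rw [sum_comm]
  refine sum_congr rfl fun i _ => ?_
  rw [sum_comm]
  simp only [sum_boole, filter_mem_eq_inter, univ_inter, Nat.cast_id]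

variable {S E}

theorem sum_sum_card_inter_le {p : ℝ} (hE : ∀ i ∈ S, (#(E i) : ℝ) = p * card Ω)
    (hEE : ∀ i ∈ S, ∀ j ∈ S, i ≠ j → (#(E i ∩ E j) : ℝ) ≤ p ^ 2 * card Ω) :
    ∑ i ∈ S, ∑ j ∈ S, (#(E i ∩ E j) : ℝ) ≤ #S * p * card Ω * (1 + #S * p) := by
  classical
  calc ∑ i ∈ S, ∑ j ∈ S, (#(E i ∩ E j) : ℝ)
      ≤ ∑ i ∈ S, (p * card Ω + #S * (p ^ 2 * card Ω)) := by
        refine sum_le_sum fun i hi => ?_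
        rw [← add_sum_erase S (fun j => (#(E i ∩ E j) : ℝ)) hi, inter_self, hE i hi]
        have hcard : (#(S.erase i) : ℝ) ≤ #S := by exact_mod_cast card_erase_le
        have hoff := sum_le_card_nsmul (S.erase i) (fun j => (#(E i ∩ E j) : ℝ)) _
          fun j hj => hEE i hi j (mem_of_mem_erase hj) (ne_of_mem_erase hj).symm
        rw [nsmul_eq_mul] at hoff
        gcongr
        exact hoff.trans (by gcongr)
    _ = #S * p * card Ω * (1 + #S * p) := by
        rw [sum_const, nsmul_eq_mul]; ring

/-- The second moment method, for events `E i` of density `p` that are pairwise at most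
independent. -/
theorem card_filter_forall_notMem_mul_le {p : ℝ}
    (hE : ∀ i ∈ S, (#(E i) : ℝ) = p * card Ω)
    (hEE : ∀ i ∈ S, ∀ j ∈ S, i ≠ j → (#(E i ∩ E j) : ℝ) ≤ p ^ 2 * card Ω) :
    #{ω | ∀ i ∈ S, ω ∉ E i} * (1 + #S * p) ≤ card Ω := by
  set N : Ω → ℝ := fun ω => hitCount S E ω
  set W : ℝ := card Ω
  set s : ℝ := #S * p
  set G : ℝ := ((#{ω | N ω ≠ 0} : ℕ) : ℝ)
  have hN1 : ∑ ω, N ω = s * W := by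
    simp only [N, ← Nat.cast_sum, sum_hitCount]
    rw [Nat.cast_sum, sum_congr rfl hE, sum_const, nsmul_eq_mul, mul_assoc]
  have hN2 : ∑ ω, N ω ^ 2 ≤ s * W * (1 + s) := by
    simp only [N, ← Nat.cast_pow, ← Nat.cast_sum, sum_hitCount_sq]
    push_cast
    exact sum_sum_card_inter_le hE hEE
  have hCS : (s * W) ^ 2 ≤ G * (s * W * (1 + s)) :=
    calc (s * W) ^ 2 = (∑ ω, N ω) ^ 2 := by rw [hN1]
      _ ≤ G * ∑ ω, N ω ^ 2 := sq_sum_le_card_filter_ne_zero_mul_sum_sq_s9 N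
      _ ≤ G * (s * W * (1 + s)) := by gcongr
  have hsplit : G + #{ω | ∀ i ∈ S, ω ∉ E i} = W := by
    simp only [G, W, N, Nat.cast_ne_zero, ne_eq, hitCount_eq_zero_iff]
    have := card_filter_add_card_filter_not (s := univ) fun ω => ∀ i ∈ S, ω ∉ E i
    rw [card_univ, add_comm] at this
    exact_mod_cast this
  have hG : 0 ≤ G := Nat.cast_nonneg _
  have hbad : (0 : ℝ) ≤ #{ω | ∀ i ∈ S, ω ∉ E i} := Nat.cast_nonneg _
  rcases le_or_gt s 0 with hs | hs
  · nlinarith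
  rcases (Nat.cast_nonneg (card Ω) : (0 : ℝ) ≤ W).eq_or_lt with hW | hW
  · nlinarith
  have hsW : s * W ≤ G * (1 + s) := le_of_mul_le_mul_left (by nlinarith) (mul_pos hs hW)
  nlinarith

end SecondMoment

section LinearFunctional

variable {F V : Type*} [Field F] [Fintype F] [DecidableEq F] [AddCommGroup V] [Module F V]
  [Fintype V]

theorem card_fiber_mul_card_eq {φ : V →ₗ[F] F} (hφ : φ ≠ 0) (x : F) :
    #{v | φ v = x} * card F = card V := by
  have hsurj := LinearMap.surjective_of_ne_zero hφ
  calc #{v | φ v = x} * card F = ∑ y : F, #{v | φ v = y} := by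
        rw [sum_congr rfl fun y _ => AddMonoidHom.card_fiber_eq_of_mem_range φ (hsurj y) (hsurj x),
          sum_const, card_univ, smul_eq_mul, mul_comm]
    _ = card V := (card_eq_sum_card_fiberwise fun v _ => mem_univ (φ v)).symm

theorem card_fiber_mul_card_le (φ : V →ₗ[F] F) {x : F} (hx : x ≠ 0) :
    #{v | φ v = x} * card F ≤ card V := by
  rcases eq_or_ne φ 0 with rfl | hφ
  · simp [hx.symm]
  · exact (card_fiber_mul_card_eq hφ x).le

end LinearFunctional

section DotProduct

variable {F ι : Type*} [Field F] [Fintype F] [DecidableEq F] [Fintype ι] [DecidableEq ι]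

theorem card_dotProduct_eq_mul_card {a : ι → F} (ha : a ≠ 0) (x : F) :
    #{g | a ⬝ᵥ g = x} * card F = card F ^ card ι := by
  rw [← card_fun]
  exact card_fiber_mul_card_eq ((dotProductEquiv F ι).map_ne_zero_iff.mpr ha) x

theorem card_dotProduct_eq_and_eq_mul_card_sq_le {a b : ι → F} (hab : a ≠ b) {x : F}
    (hx : x ≠ 0) : #{g | a ⬝ᵥ g = x ∧ b ⬝ᵥ g = x} * card F ^ 2 ≤ card F ^ card ι := by
  classical
  set K := LinearMap.ker (dotProductEquiv F ι (a - b))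
  have hK : card K * card F = card F ^ card ι := by
    rw [← card_dotProduct_eq_mul_card (sub_ne_zero.mpr hab) 0, Fintype.card_subtype]
    simp [K]
  have hpair : #{g | a ⬝ᵥ g = x ∧ b ⬝ᵥ g = x}
      = #{v : K | (dotProductEquiv F ι a).domRestrict K v = x} := by
    rw [← Fintype.card_subtype, ← Fintype.card_subtype]
    refine card_congr ((Equiv.subtypeSubtypeEquivSubtypeInter (· ∈ K) (a ⬝ᵥ · = x)).trans
      (Equiv.subtypeEquivRight fun g => ?_)).symm
    simp only [K, LinearMap.mem_ker, dotProductEquiv_apply_apply, sub_dotProduct, sub_eq_zero]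
    constructor
    · rintro ⟨hab, ha⟩; exact ⟨ha, hab ▸ ha⟩
    · rintro ⟨ha, hb⟩; exact ⟨ha.trans hb.symm, ha⟩
  calc #{g | a ⬝ᵥ g = x ∧ b ⬝ᵥ g = x} * card F ^ 2
      = #{v : K | (dotProductEquiv F ι a).domRestrict K v = x} * card F * card F := by
        rw [hpair, sq, mul_assoc]
    _ ≤ card K * card F := by gcongr; exact card_fiber_mul_card_le _ hx
    _ = card F ^ card ι := hK

theorem card_filter_forall_dotProduct_ne_mul_le (S : Finset (ι → F)) (hS : 0 ∉ S) {x : F}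
    (hx : x ≠ 0) : #{g | ∀ a ∈ S, a ⬝ᵥ g ≠ x} * (card F + #S) ≤ card F ^ (card ι + 1) := by
  have hF : (0 : ℝ) < card F := by exact_mod_cast Fintype.card_pos
  have hmoment := card_filter_forall_notMem_mul_le (S := S) (E := fun a => {g : ι → F | a ⬝ᵥ g = x})
    (p := (card F : ℝ)⁻¹) (fun a ha => ?_) (fun a _ b _ hab => ?_)
  · simp only [mem_filter, mem_univ, true_and, card_fun] at hmoment
    have hmul := mul_le_mul_of_nonneg_right hmoment hF.le
    rw [mul_assoc, add_mul, one_mul, mul_assoc, inv_mul_cancel₀ hF.ne', mul_one] at hmul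
    rw [pow_succ]
    exact_mod_cast hmul
  · have := card_dotProduct_eq_mul_card (ne_of_mem_of_not_mem ha hS) x
    rw [card_fun, eq_inv_mul_iff_mul_eq₀ hF.ne', mul_comm]
    exact_mod_cast this
  · have := card_dotProduct_eq_and_eq_mul_card_sq_le hab hx
    rw [← filter_and, card_fun, inv_pow, inv_mul_eq_div, le_div_iff₀ (by positivity)]
    exact_mod_cast this

theorem card_filter_notMem_image_dotProduct_mul_le {S : Finset (ι → F)} (hS : 0 ∈ S) (x : F) :
    #{g | x ∉ S.image (· ⬝ᵥ g)} * (#S - 1) ≤ card F ^ (card ι + 1) := by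
  rcases eq_or_ne x 0 with rfl | hx
  · have h0 : ∀ g : ι → F, (0 : F) ∈ S.image (· ⬝ᵥ g) := fun g =>
      mem_image.mpr ⟨0, hS, zero_dotProduct g⟩
    rw [filter_false_of_mem fun g _ => not_not.mpr (h0 g)]
    simp
  calc #{g | x ∉ S.image (· ⬝ᵥ g)} * (#S - 1)
      ≤ #{g | ∀ a ∈ S.erase 0, a ⬝ᵥ g ≠ x} * (card F + #(S.erase 0)) := by
        gcongr
        · exact fun h a ha hax => h (mem_image.mpr ⟨a, mem_of_mem_erase ha, hax⟩)
        · rw [card_erase_of_mem hS]; omega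
    _ ≤ card F ^ (card ι + 1) := card_filter_forall_dotProduct_ne_mul_le _ (notMem_erase 0 S) hx

theorem card_filter_two_mul_card_image_dotProduct_le_mul_le {S : Finset (ι → F)} (hS : 0 ∈ S) :
    #{g | 2 * #(S.image (· ⬝ᵥ g)) ≤ card F} * (#S - 1) ≤ 2 * card F ^ (card ι + 1) := by
  have hevent : ∀ g : ι → F,
      2 * #(S.image (· ⬝ᵥ g)) ≤ card F ↔ card F ≤ 2 * #{x | x ∉ S.image (· ⬝ᵥ g)} := fun g => by
    have : #(S.image (· ⬝ᵥ g)) + #{x | x ∉ S.image (· ⬝ᵥ g)} = card F := by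
      rw [← card_add_card_compl (S.image (· ⬝ᵥ g))]
      congr 2
      ext
      simp
    omega
  refine Nat.le_of_mul_le_mul_right ?_ (Fintype.card_pos (α := F))
  calc #{g | 2 * #(S.image (· ⬝ᵥ g)) ≤ card F} * (#S - 1) * card F
      = #{g | card F ≤ 2 * #{x | x ∉ S.image (· ⬝ᵥ g)}} * card F * (#S - 1) := by
        rw [filter_congr fun g _ => hevent g, mul_right_comm]
    _ ≤ (∑ g : ι → F, 2 * #{x | x ∉ S.image (· ⬝ᵥ g)}) * (#S - 1) := by
        gcongr; exact card_filter_le_mul_le_sum_s9 _ _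
    _ = 2 * ∑ x, #{g | x ∉ S.image (· ⬝ᵥ g)} * (#S - 1) := by
        simp only [← mul_sum, ← sum_mul, card_filter]
        rw [sum_comm, mul_assoc]
    _ ≤ 2 * ∑ _x : F, card F ^ (card ι + 1) := by
        gcongr with x; exact card_filter_notMem_image_dotProduct_mul_le hS x
    _ = 2 * card F ^ (card ι + 1) * card F := by
        rw [sum_const, card_univ, smul_eq_mul, mul_comm (card F), mul_assoc]

end DotProduct

section DiscreteCube

variable (q k L : ℕ)

def discreteCube : Finset (Fin k → ZMod q) :=
  (piFinset fun _ => range L).image fun i j => (i j : ZMod q)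

variable {q k L}

theorem zero_mem_discreteCube (hL : 0 < L) : 0 ∈ discreteCube q k L :=
  mem_image.mpr ⟨0, by simp [Fintype.mem_piFinset, hL], by ext; simp⟩

theorem card_discreteCube (hLq : L ≤ q) : #(discreteCube q k L) = L ^ k := by
  rw [discreteCube, card_image_of_injOn, card_piFinset, prod_const, card_range, card_univ,
    Fintype.card_fin]
  intro i hi i' hi' h
  funext j
  have hij := congrFun h j
  simp only [coe_piFinset, Set.mem_pi, Set.mem_univ, mem_coe, mem_range, forall_const] at hi hi'
  rw [ZMod.natCast_eq_natCast_iff', Nat.mod_eq_of_lt ((hi j).trans_le hLq),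
    Nat.mod_eq_of_lt ((hi' j).trans_le hLq)] at hij
  exact hij

theorem coe_image_dotProduct_discreteCube (g : Fin k → ZMod q) :
    ((discreteCube q k L).image (· ⬝ᵥ g) : Set (ZMod q))
      = {x | ∃ i : Fin k → ℕ, (∀ j, i j < L) ∧ x = ∑ j, i j • g j} := by
  ext x
  simp [discreteCube, dotProduct, nsmul_eq_mul, eq_comm]

end DiscreteCube

/-- For `q` prime, `k ≥ 1` and `2 ≤ L ≤ q`, with probability at least `1 - 2q/(L^k - 1)`
over uniform `g : Fin k → ZMod q`, more than `q/2` elements `x` of `ZMod q` can be written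
as `x = ∑ j, i j • g j` with all `i j < L`. -/
theorem prob_large_reachable_set (q k : ℕ) (hq : Nat.Prime q) (hk : 1 ≤ k)
    (L : ℕ) (hL2 : 2 ≤ L) (hLq : L ≤ q) :
    1 - 2 * (q : ℝ) / ((L : ℝ) ^ k - 1)
      ≤ Pr (Fin k → ZMod q)
          (fun g => (q : ℝ) / 2 <
            (Nat.card {x : ZMod q |
              ∃ i : Fin k → ℕ, (∀ j, i j < L) ∧ x = ∑ j, (i j) • g j} : ℝ)) := by
  classical
  have := Fact.mk hq
  have hcount := card_filter_two_mul_card_image_dotProduct_le_mul_le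
    (zero_mem_discreteCube (q := q) (k := k) (by omega : 0 < L))
  rw [card_discreteCube hLq, Fintype.card_fin, ZMod.card] at hcount
  have hLk : 2 ≤ L ^ k := (Nat.le_self_pow (by omega) L).trans' hL2
  have hLk' : (0 : ℝ) < (L : ℝ) ^ k - 1 := by
    have : (2 : ℝ) ≤ (L : ℝ) ^ k := by exact_mod_cast hLk
    linarith
  refine one_sub_le_Pr (α := Fin k → ZMod q) _ ?_
  simp_rw [← coe_image_dotProduct_discreteCube, Nat.card_coe_set_eq, Set.ncard_coe_finset, not_lt,
    Fintype.card_fun, Fintype.card_fin, ZMod.card]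
  have hevent : ∀ n : ℕ, (n : ℝ) ≤ q / 2 ↔ 2 * n ≤ q := fun n => by
    rw [le_div_iff₀ two_pos, mul_comm]; norm_cast
  simp_rw [hevent]
  have hbad : (#{g : Fin k → ZMod q | 2 * #((discreteCube q k L).image (· ⬝ᵥ g)) ≤ q} : ℝ)
      * ((L : ℝ) ^ k - 1) ≤ 2 * q ^ (k + 1) := by
    rw [← Nat.cast_pow, ← Nat.cast_one, ← Nat.cast_sub (by omega)]
    exact_mod_cast hcount
  rw [div_mul_eq_mul_div, le_div_iff₀ hLk']
  push_cast
  linarith [pow_succ (q : ℝ) k]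
end

section
/- For every natural number L ≥ 1, the number of pairs (a, b) of natural numbers with 1 ≤ a ≤ L, 1 ≤ b ≤ L, and gcd(a, b) = 1 is strictly greater than L²/2. -/
/-!
A pair with `gcd = g ≠ 1` has the common divisor `2` if `g` is even and `g` itself otherwise, so
at most `⌊L/2⌋² + ∑_{j<L} ⌊L/(2j+3)⌋²` pairs are not coprime. The even term is at most `L²/4`, and
since `(2j+3)² > 4(j+1)(j+2)` the odd terms are dominated by the telescoping sum
`L²/4 · ∑_{j<L} (1/(j+1) - 1/(j+2)) = L²/4 · (1 - 1/(L+1)) < L²/4`.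
-/

open Finset

def commonMultiplePairs (L d : ℕ) : Finset (ℕ × ℕ) :=
  {p ∈ Icc 1 L ×ˢ Icc 1 L | d ∣ p.1 ∧ d ∣ p.2}

lemma card_commonMultiplePairs (L d : ℕ) : #(commonMultiplePairs L d) = (L / d) ^ 2 := by
  have hIcc : Icc 1 L = Ioc 0 L := Icc_add_one_left_eq_Ioc 0 L
  rw [commonMultiplePairs, filter_product, card_product, hIcc, Nat.Ioc_filter_dvd_card_eq_div, sq]

lemma filter_gcd_ne_one_subset (L : ℕ) :
    {p ∈ Icc 1 L ×ˢ Icc 1 L | Nat.gcd p.1 p.2 ≠ 1} ⊆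
      commonMultiplePairs L 2 ∪ (range L).biUnion (fun j => commonMultiplePairs L (2 * j + 3)) := by
  intro p hp
  obtain ⟨hpL, hg⟩ := mem_filter.mp hp
  obtain ⟨ha1, haL⟩ := mem_Icc.mp (mem_product.mp hpL).1
  set g := Nat.gcd p.1 p.2
  have hg0 : 0 < g := Nat.gcd_pos_of_pos_left _ ha1
  have hgL : g ≤ L := (Nat.le_of_dvd ha1 (Nat.gcd_dvd_left _ _)).trans haL
  have hcommon : ∀ {d}, d ∣ g → d ∣ p.1 ∧ d ∣ p.2 := fun hd =>
    ⟨hd.trans (Nat.gcd_dvd_left _ _), hd.trans (Nat.gcd_dvd_right _ _)⟩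
  simp only [mem_union, mem_biUnion, mem_range, commonMultiplePairs, mem_filter]
  rcases Nat.even_or_odd g with ⟨k, hk⟩ | ⟨k, hk⟩
  · exact Or.inl ⟨hpL, hcommon ⟨k, by omega⟩⟩
  · exact Or.inr ⟨k - 1, by omega, hpL, hcommon (dvd_of_eq (by omega))⟩

lemma card_filter_gcd_ne_one_le (L : ℕ) :
    #{p ∈ Icc 1 L ×ˢ Icc 1 L | Nat.gcd p.1 p.2 ≠ 1} ≤
      (L / 2) ^ 2 + ∑ j ∈ range L, (L / (2 * j + 3)) ^ 2 := by
  refine (card_le_card (filter_gcd_ne_one_subset L)).trans <| (card_union_le _ _).trans ?_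
  rw [card_commonMultiplePairs]
  gcongr
  exact card_biUnion_le.trans (sum_le_sum fun j _ => (card_commonMultiplePairs L _).le)

lemma Nat.cast_div_sq_le {α : Type*} [Field α] [LinearOrder α] [IsStrictOrderedRing α]
    (m n : ℕ) : ((m / n : ℕ) : α) ^ 2 ≤ (m / n : α) ^ 2 :=
  pow_le_pow_left₀ (Nat.cast_nonneg _) Nat.cast_div_le 2

lemma sum_range_inv_sub_inv (n : ℕ) :
    ∑ j ∈ range n, (1 / (j + 1) - 1 / (j + 2) : ℝ) = 1 - 1 / (n + 1) := by
  have := sum_range_sub' (fun j : ℕ => (1 / (j + 1) : ℝ)) n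
  push_cast at this
  simpa [add_assoc, one_add_one_eq_two] using this

lemma sum_range_div_odd_sq_le (L : ℕ) :
    ∑ j ∈ range L, ((L / (2 * j + 3) : ℕ) : ℝ) ^ 2 ≤ (L : ℝ) ^ 2 / 4 * (1 - 1 / (L + 1)) := by
  rw [← sum_range_inv_sub_inv, mul_sum]
  refine sum_le_sum fun j _ => (Nat.cast_div_sq_le _ _).trans ?_
  have hj : (0 : ℝ) ≤ j := j.cast_nonneg
  have htele : (1 / (j + 1) - 1 / (j + 2) : ℝ) = 1 / ((j + 1) * (j + 2)) := by
    field_simp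
    ring
  rw [htele, mul_one_div, div_div, div_pow]
  push_cast
  gcongr
  nlinarith

/-- For every `L ≥ 1`, the number of pairs `(a, b)` with `1 ≤ a ≤ L`, `1 ≤ b ≤ L` and
`gcd(a, b) = 1` is strictly greater than `L²/2`. -/
theorem coprime_pairs_count (L : ℕ) (hL : 1 ≤ L) :
    (L : ℝ) ^ 2 / 2 <
      (((Finset.Icc 1 L ×ˢ Finset.Icc 1 L).filter
        (fun p => Nat.gcd p.1 p.2 = 1)).card : ℝ) := by
  have hsplit := card_filter_add_card_filter_not (s := Icc 1 L ×ˢ Icc 1 L)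
    (fun p => Nat.gcd p.1 p.2 = 1)
  rw [card_product, Nat.card_Icc, Nat.add_sub_cancel] at hsplit
  have hnoncoprime : (#{p ∈ Icc 1 L ×ˢ Icc 1 L | Nat.gcd p.1 p.2 ≠ 1} : ℝ) ≤
      (L : ℝ) ^ 2 / 4 + (L : ℝ) ^ 2 / 4 * (1 - 1 / (L + 1)) := by
    refine (Nat.cast_le.mpr (card_filter_gcd_ne_one_le L)).trans ?_
    push_cast
    gcongr
    · exact (Nat.cast_div_sq_le L 2).trans_eq (by ring)
    · exact sum_range_div_odd_sq_le L
  have hgain : 0 < (L : ℝ) ^ 2 / 4 * (1 / (L + 1)) := by positivity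
  have hsplitR : (#{p ∈ Icc 1 L ×ˢ Icc 1 L | Nat.gcd p.1 p.2 = 1} : ℝ) +
      #{p ∈ Icc 1 L ×ˢ Icc 1 L | Nat.gcd p.1 p.2 ≠ 1} = (L : ℝ) ^ 2 := by
    exact_mod_cast hsplit.trans (sq L).symm
  nlinarith
end

section
/- Let q be prime, k ≥ 2, and let i, j : Fin k → ℕ be such that every entry of i and of j is strictly less than √q. Suppose there exists c ∈ ZMod q such that for all m, (i_m : ZMod q) = c · (j_m : ZMod q) (i.e., the reductions mod q of i and j are linearly dependent over ZMod q with i = c·j). Then i_0 · j_1 = i_1 · j_0 as natural numbers. -/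
/-! Both cross products `i₀ j₁` and `i₁ j₀` are below `√q · √q = q`, and they agree mod `q`
because `i ≡ c j`; two naturals below `q` that agree mod `q` are equal. -/

theorem Nat.mul_lt_of_lt_sqrt {q a b : ℕ} (ha : (a : ℝ) < √q) (hb : (b : ℝ) < √q) :
    a * b < q := by
  have h : (a : ℝ) * b < √q * √q := _root_.mul_lt_mul'' ha hb (by positivity) (by positivity)
  rw [Real.mul_self_sqrt (Nat.cast_nonneg q)] at h
  exact_mod_cast h

theorem cross_mul_eq_of_eq_mul {ι R : Type*} [CommSemigroup R] {x y : ι → R} {c : R}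
    (h : ∀ m, x m = c * y m) (a b : ι) : x a * y b = x b * y a := by
  rw [h a, h b, mul_right_comm, mul_assoc]

/-- For `q` prime and `k ≥ 2`, if `i, j : Fin k → ℕ` have all entries `< √q` and their
reductions mod `q` satisfy `i = c • j` for some scalar `c : ZMod q`, then
`i 0 * j 1 = i 1 * j 0` as natural numbers. -/
theorem dependent_small_vectors (q k : ℕ) (hk : 2 ≤ k)
    (i j : Fin k → ℕ)
    (hi : ∀ m, (i m : ℝ) < Real.sqrt q) (hj : ∀ m, (j m : ℝ) < Real.sqrt q)
    (hdep : ∃ c : ZMod q, ∀ m, (i m : ZMod q) = c * (j m : ZMod q)) :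
    i ⟨0, by omega⟩ * j ⟨1, by omega⟩ = i ⟨1, by omega⟩ * j ⟨0, by omega⟩ := by
  obtain ⟨c, hc⟩ := hdep
  have hmod : i ⟨0, by omega⟩ * j ⟨1, by omega⟩ ≡ i ⟨1, by omega⟩ * j ⟨0, by omega⟩ [MOD q] := by
    rw [← ZMod.natCast_eq_natCast_iff, Nat.cast_mul, Nat.cast_mul]
    exact cross_mul_eq_of_eq_mul hc _ _
  exact hmod.eq_of_lt_of_lt (Nat.mul_lt_of_lt_sqrt (hi _) (hj _))
    (Nat.mul_lt_of_lt_sqrt (hi _) (hj _))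
end

section
/- Let q be prime, k ≥ 2, and let L ≥ 1 be a natural number with L² < q. Then there exists a finite set I of vectors i : Fin k → ℕ, each with all entries in {1, …, L}, such that |I| > L^k/2 and for every two distinct i, j ∈ I their reductions modulo q are linearly independent over ZMod q (in particular each reduction is nonzero and no one is a ZMod q-scalar multiple of another). -/
/-!
Take all vectors in `[1, L]^k` whose first two entries are coprime. Entries are at most `L` and
`L² < q`, so a proportionality modulo `q` lifts to the integer identities `i m * j n = i n * j m`,
and coprimality of the first two entries then forces `i = j`.

For the count it suffices that more than half of the pairs in `[1, L]²` are coprime. A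
non-coprime pair with `b ≤ a` is `g • (x, y)` with `x, y` coprime and `g ≥ 2`; the shear
`(x, y + (g - 1) x)` is a coprime pair in `[1, L]²` with first entry smaller than the second,
from which `(a, b)` can be read back. With its mirror image for `a < b`, this injects the
non-coprime pairs into the off-diagonal coprime pairs, and `(1, 1)` is left over.
-/

open Finset

lemma card_filter_piFinset_fin_add_two {α : Type*} (s : Finset α) (P : α → α → Prop)
    [DecidableRel P] (n : ℕ) :
    #{i ∈ Fintype.piFinset (fun _ : Fin (n + 2) => s) | P (i 0) (i 1)} =
      #{p ∈ s ×ˢ s | P p.1 p.2} * #s ^ n := by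
  rw [← Fintype.card_piFinset_const, ← card_product]
  refine card_nbij' (fun i => ((i 0, i 1), Fin.tail (Fin.tail i)))
    (fun p => Fin.cons p.1.1 (Fin.cons p.1.2 p.2)) ?_ ?_ ?_ ?_
  · intro i hi
    simp_all [Fin.tail]
  · rintro ⟨⟨a, b⟩, r⟩ h
    simp_all [Fin.forall_fin_succ]
  · intro i _
    rw [← Fin.cons_self_tail i, ← Fin.cons_self_tail (Fin.tail i)]
    rfl
  · rintro ⟨⟨a, b⟩, r⟩ _
    simp

def gcdShear (a b : ℕ) : ℕ × ℕ :=
  (a / a.gcd b, b / a.gcd b + (a.gcd b - 1) * (a / a.gcd b))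

lemma gcdShear_mul {g x y : ℕ} (hg : 0 < g) (hxy : x.Coprime y) :
    gcdShear (x * g) (y * g) = (x, y + (g - 1) * x) := by
  have hgcd : (x * g).gcd (y * g) = g := by rw [Nat.gcd_mul_right, hxy, one_mul]
  simp only [gcdShear, hgcd, Nat.mul_div_cancel _ hg]

lemma gcdShear_spec {a b : ℕ} (hb : 0 < b) (hba : b ≤ a) (hab : ¬ a.Coprime b) :
    (gcdShear a b).1.Coprime (gcdShear a b).2 ∧ 0 < (gcdShear a b).1 ∧
      (gcdShear a b).1 < (gcdShear a b).2 ∧ (gcdShear a b).2 ≤ a := by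
  obtain ⟨g, x, y, hg, hxy, rfl, rfl⟩ := Nat.exists_coprime' (Nat.gcd_pos_of_pos_right a hb)
  have hg1 : g ≠ 1 := by rintro rfl; simp_all
  have hy : 0 < y := Nat.pos_of_mul_pos_right hb
  have hyx : y ≤ x := Nat.le_of_mul_le_mul_right hba hg
  have hx : x ≤ (g - 1) * x := Nat.le_mul_of_pos_left x (by omega)
  have hgx : (g - 1) * x + x = x * g := by
    rw [← add_one_mul, Nat.sub_one_add_one hg.ne', mul_comm]
  rw [gcdShear_mul hg hxy]
  exact ⟨(Nat.coprime_add_mul_right_right x y _).2 hxy, by omega, by dsimp only; omega,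
    by dsimp only; omega⟩

-- For `y ≤ x`, `(g - 1, y - 1)` is the quotient and remainder of `y + (g - 1) * x - 1` by `x`.
lemma gcdShear_injOn :
    Set.InjOn (fun p : ℕ × ℕ => gcdShear p.1 p.2) {p | 0 < p.2 ∧ p.2 ≤ p.1} := by
  rintro ⟨a, b⟩ ⟨hb, hba⟩ ⟨a', b'⟩ ⟨hb', hba'⟩ h
  obtain ⟨g, x, y, hg, hxy, rfl, rfl⟩ := Nat.exists_coprime' (Nat.gcd_pos_of_pos_right a hb)
  obtain ⟨g', x', y', hg', hxy', rfl, rfl⟩ :=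
    Nat.exists_coprime' (Nat.gcd_pos_of_pos_right a' hb')
  simp only [gcdShear_mul hg hxy, gcdShear_mul hg' hxy', Prod.mk.injEq] at h
  obtain ⟨rfl, hw⟩ := h
  dsimp only at hb hba hb' hba'
  have hy : 0 < y := Nat.pos_of_mul_pos_right hb
  have hy' : 0 < y' := Nat.pos_of_mul_pos_right hb'
  have hyx : y ≤ x := Nat.le_of_mul_le_mul_right hba hg
  have hyx' : y' ≤ x := Nat.le_of_mul_le_mul_right hba' hg'
  have hx : 0 < x := by omega
  have hq : (y + (g - 1) * x - 1) / x = g - 1 ∧ (y + (g - 1) * x - 1) % x = y - 1 :=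
    (Nat.div_mod_unique hx).2 ⟨by rw [mul_comm]; omega, by omega⟩
  have hq' : (y' + (g' - 1) * x - 1) / x = g' - 1 ∧ (y' + (g' - 1) * x - 1) % x = y' - 1 :=
    (Nat.div_mod_unique hx).2 ⟨by rw [mul_comm]; omega, by omega⟩
  rw [hw] at hq
  obtain ⟨rfl, rfl⟩ : g = g' ∧ y = y' := by omega
  rfl

def gcdShearSymm (p : ℕ × ℕ) : ℕ × ℕ :=
  if p.2 ≤ p.1 then gcdShear p.1 p.2 else (gcdShear p.2 p.1).swap

lemma gcdShearSymm_injOn :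
    Set.InjOn gcdShearSymm {p | 0 < p.1 ∧ 0 < p.2 ∧ ¬ p.1.Coprime p.2} := by
  rintro ⟨a, b⟩ ⟨ha, hb, hab⟩ ⟨a', b'⟩ ⟨ha', hb', hab'⟩ h
  dsimp only at ha hb hab ha' hb' hab'
  by_cases hba : b ≤ a <;> by_cases hba' : b' ≤ a' <;>
    simp only [gcdShearSymm, hba, hba', if_true, if_false] at h
  · exact @gcdShear_injOn (a, b) ⟨hb, hba⟩ (a', b') ⟨hb', hba'⟩ h
  · have h1 := (gcdShear_spec hb hba hab).2.2.1
    have h2 := (gcdShear_spec ha' (by omega) (mt Nat.Coprime.symm hab')).2.2.1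
    rw [h, Prod.fst_swap, Prod.snd_swap] at h1
    omega
  · have h1 := (gcdShear_spec ha (by omega) (mt Nat.Coprime.symm hab)).2.2.1
    have h2 := (gcdShear_spec hb' hba' hab').2.2.1
    rw [← h, Prod.fst_swap, Prod.snd_swap] at h2
    omega
  · have := @gcdShear_injOn (b, a) ⟨ha, by omega⟩ (b', a') ⟨ha', by omega⟩
      (Prod.swap_injective h)
    simp_all

lemma card_filter_not_coprime_lt {L : ℕ} (hL : 0 < L) :
    #{p ∈ Icc 1 L ×ˢ Icc 1 L | ¬ p.1.Coprime p.2} <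
      #{p ∈ Icc 1 L ×ˢ Icc 1 L | p.1.Coprime p.2} := by
  set N := {p ∈ Icc 1 L ×ˢ Icc 1 L | ¬ p.1.Coprime p.2}
  set C := {p ∈ Icc 1 L ×ˢ Icc 1 L | p.1.Coprime p.2}
  have hmaps : Set.MapsTo gcdShearSymm N ({p ∈ C | p.1 ≠ p.2} : Finset (ℕ × ℕ)) := by
    rintro ⟨a, b⟩ hp
    simp only [N, C, coe_filter, mem_filter, mem_product, mem_Icc, Set.mem_ofPred_eq] at hp ⊢
    obtain ⟨⟨⟨ha, haL⟩, hb, hbL⟩, hab⟩ := hp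
    by_cases hba : b ≤ a
    · obtain ⟨hcop, h1, h12, h2⟩ := gcdShear_spec hb hba hab
      simp only [gcdShearSymm, if_pos hba]
      exact ⟨⟨⟨⟨by omega, by omega⟩, by omega, by omega⟩, hcop⟩, by omega⟩
    · obtain ⟨hcop, h1, h12, h2⟩ := gcdShear_spec ha (by omega) (mt Nat.Coprime.symm hab)
      simp only [gcdShearSymm, if_neg hba, Prod.fst_swap, Prod.snd_swap]
      exact ⟨⟨⟨⟨by omega, by omega⟩, by omega, by omega⟩, hcop.symm⟩, by omega⟩
  have hinj : Set.InjOn gcdShearSymm N := gcdShearSymm_injOn.mono fun p hp => by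
    simp only [N, coe_filter, mem_product, mem_Icc, Set.mem_ofPred_eq] at hp
    exact ⟨by omega, by omega, hp.2⟩
  calc #N ≤ #{p ∈ C | p.1 ≠ p.2} := card_le_card_of_injOn gcdShearSymm hmaps hinj
    _ < #C := card_lt_card (filter_ssubset.2 ⟨(1, 1), by simp [C]; omega, by simp⟩)

lemma sq_lt_two_mul_card_filter_coprime {L : ℕ} (hL : 0 < L) :
    L ^ 2 < 2 * #{p ∈ Icc 1 L ×ˢ Icc 1 L | p.1.Coprime p.2} := by
  have hsplit :=
    card_filter_add_card_filter_not (s := Icc 1 L ×ˢ Icc 1 L) fun p => p.1.Coprime p.2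
  rw [card_product, Nat.card_Icc, add_tsub_cancel_right] at hsplit
  have hlt := card_filter_not_coprime_lt hL
  rw [sq]
  omega

lemma ZMod.natCast_inj_of_lt {n a b : ℕ} (ha : a < n) (hb : b < n) (h : (a : ZMod n) = b) :
    a = b := by
  simpa [ZMod.val_natCast_of_lt ha, ZMod.val_natCast_of_lt hb] using congrArg ZMod.val h

lemma mul_eq_mul_of_eq_smul {ι R : Type*} [CommSemiring R] {u v : ι → R} {c : R}
    (h : u = c • v) (m n : ι) : u m * v n = u n * v m := by
  simp only [h, Pi.smul_apply, smul_eq_mul]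
  ring

lemma eq_of_forall_mul_eq_mul_of_coprime {ι : Type*} {u v : ι → ℕ} {m n : ι}
    (hu : (u m).Coprime (u n)) (hv : (v m).Coprime (v n)) (hpos : 0 < u m)
    (h : ∀ a b, u a * v b = u b * v a) : u = v := by
  have hm : u m = v m := Nat.dvd_antisymm
    (hu.dvd_of_dvd_mul_left ⟨v n, (h m n).symm⟩)
    (hv.dvd_of_dvd_mul_left ⟨u n, by rw [mul_comm, h m n, mul_comm]⟩)
  funext a
  exact Nat.eq_of_mul_eq_mul_right hpos (by rw [mul_comm (v a), ← h a m, hm])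

lemma eq_of_natCast_eq_smul_of_coprime {ι : Type*} {q L : ℕ} (hLq : L ^ 2 < q) {u v : ι → ℕ}
    (hu : ∀ a, u a ≤ L) (hv : ∀ a, v a ≤ L) {m n : ι} (hu' : (u m).Coprime (u n))
    (hv' : (v m).Coprime (v n)) (hpos : 0 < u m) {c : ZMod q}
    (h : (fun a => (u a : ZMod q)) = c • fun a => (v a : ZMod q)) : u = v := by
  have hlt a b : u a * v b < q := (Nat.mul_le_mul (hu a) (hv b)).trans_lt (by rwa [← sq])
  refine eq_of_forall_mul_eq_mul_of_coprime hu' hv' hpos fun a b => ?_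
  exact ZMod.natCast_inj_of_lt (hlt a b) (hlt b a) (by push_cast; exact mul_eq_mul_of_eq_smul h a b)

theorem exists_pairwise_independent_family_general (q k : ℕ) (hk : 2 ≤ k)
    (L : ℕ) (hL : 1 ≤ L) (hLq : L ^ 2 < q) :
    ∃ I : Finset (Fin k → ℕ),
      (∀ i ∈ I, ∀ m, i m ∈ Finset.Icc 1 L) ∧
      (L : ℝ) ^ k / 2 < (I.card : ℝ) ∧
      (∀ i ∈ I, (fun m => ((i m : ZMod q))) ≠ 0) ∧
      (∀ i ∈ I, ∀ j ∈ I, i ≠ j →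
        ∀ c : ZMod q, (fun m => ((i m : ZMod q))) ≠ c • (fun m => ((j m : ZMod q)))) := by
  obtain ⟨n, rfl⟩ := Nat.exists_eq_add_of_le' hk
  set I := {i ∈ Fintype.piFinset fun _ : Fin (n + 2) => Icc 1 L | (i 0).Coprime (i 1)}
  have hmem {i} (hi : i ∈ I) : (∀ m, i m ∈ Icc 1 L) ∧ (i 0).Coprime (i 1) := by
    simpa only [I, mem_filter, Fintype.mem_piFinset] using hi
  refine ⟨I, fun i hi => (hmem hi).1, ?_, fun i hi h => ?_, fun i hi j hj hij c h => ?_⟩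
  · rw [card_filter_piFinset_fin_add_two, Nat.card_Icc, add_tsub_cancel_right,
      div_lt_iff₀ two_pos]
    have := Nat.mul_lt_mul_of_pos_right (sq_lt_two_mul_card_filter_coprime hL) (pow_pos hL n)
    rw [← pow_add, add_comm] at this
    exact_mod_cast (by linarith : L ^ (n + 2) < _ * L ^ n * 2)
  · have hi0 := mem_Icc.1 ((hmem hi).1 0)
    have hq : q ∣ i 0 := (ZMod.natCast_eq_zero_iff _ _).1 (congrFun h 0)
    have hLq' : L < q := (Nat.le_self_pow two_ne_zero L).trans_lt hLq
    have := Nat.eq_zero_of_dvd_of_lt hq (by omega)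
    omega
  · have hiL m := mem_Icc.1 ((hmem hi).1 m)
    have hjL m := mem_Icc.1 ((hmem hj).1 m)
    exact hij (eq_of_natCast_eq_smul_of_coprime hLq (fun m => (hiL m).2) (fun m => (hjL m).2)
      (hmem hi).2 (hmem hj).2 (hiL 0).1 h)

/-- For `q` prime, `k ≥ 2` and `L ≥ 1` with `L² < q`, there is a finite set `I` of vectors
`i : Fin k → ℕ` with all entries in `{1, …, L}`, with `|I| > L^k/2`, whose reductions
modulo `q` are pairwise linearly independent over `ZMod q` (each reduction is nonzero and
no one is a `ZMod q`-scalar multiple of another). -/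
theorem exists_pairwise_independent_family (q k : ℕ) (hq : Nat.Prime q) (hk : 2 ≤ k)
    (L : ℕ) (hL : 1 ≤ L) (hLq : L ^ 2 < q) :
    ∃ I : Finset (Fin k → ℕ),
      (∀ i ∈ I, ∀ m, i m ∈ Finset.Icc 1 L) ∧
      (L : ℝ) ^ k / 2 < (I.card : ℝ) ∧
      (∀ i ∈ I, (fun m => ((i m : ZMod q))) ≠ 0) ∧
      (∀ i ∈ I, ∀ j ∈ I, i ≠ j →
        ∀ c : ZMod q, (fun m => ((i m : ZMod q))) ≠ c • (fun m => ((j m : ZMod q)))) :=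
  exists_pairwise_independent_family_general q k hk L hL hLq
end

section
/- (Second moment bound, Lemma 4) Let q be prime, k ≥ 1, and let I be a nonempty finite set of nonzero vectors a : Fin k → ZMod q that are pairwise linearly independent over ZMod q. Then the probability, over uniform g : Fin k → ZMod q, that there exists a ∈ I with ∑_j a_j · g_j = 0, is at least |I|/(q + |I| − 1). -/
section
variable {q k : ℕ}

lemma fiber_count {G H : Type*} [AddCommGroup G] [Fintype G] [AddCommGroup H] [Fintype H]
    [DecidableEq G] [DecidableEq H] (φ : G →+ H) (hs : Function.Surjective φ) :
    (Finset.univ.filter fun g => φ g = 0).card * Fintype.card H = Fintype.card G := by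
  have h1 : (Finset.univ : Finset G).card
      = ∑ h : H, (Finset.univ.filter fun g => φ g = h).card :=
    Finset.card_eq_sum_card_fiberwise (fun x _ => Finset.mem_univ _)
  have h2 : ∀ h : H, (Finset.univ.filter fun g => φ g = h).card
      = (Finset.univ.filter fun g => φ g = 0).card := by
    intro h
    obtain ⟨g0, hg0⟩ := hs h
    apply Finset.card_bij' (fun g _ => g - g0) (fun g _ => g + g0)
    · intro g hg
      simp only [Finset.mem_filter, Finset.mem_univ, true_and] at hg ⊢
      simp [map_sub, hg, hg0]
    · intro g hg
      simp only [Finset.mem_filter, Finset.mem_univ, true_and] at hg ⊢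
      simp [map_add, hg, hg0]
    · intro g _; simp
    · intro g _; simp
  rw [Fintype.card, ← Finset.card_univ, h1, Finset.sum_congr rfl (fun h _ => h2 h),
    Finset.sum_const, smul_eq_mul, mul_comm]

lemma sum_single [NeZero q] (c : Fin k → ZMod q) (i : Fin k) (u : ZMod q) :
    ∑ l, c l * (Pi.single i u : Fin k → ZMod q) l = c i * u := by
  simp [Pi.single_apply, mul_ite, Finset.sum_ite_eq']

def lform (a : Fin k → ZMod q) : (Fin k → ZMod q) →+ ZMod q :=
  AddMonoidHom.mk' (fun g => ∑ j, a j * g j)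
    (fun x y => by simp [mul_add, Finset.sum_add_distrib])

lemma lform_apply (a g : Fin k → ZMod q) : lform a g = ∑ j, a j * g j := rfl

lemma lform_surj [Fact (Nat.Prime q)] {a : Fin k → ZMod q} (ha : a ≠ 0) :
    Function.Surjective (lform a) := by
  obtain ⟨i, hi⟩ := Function.ne_iff.mp ha
  rw [Pi.zero_apply] at hi
  intro t
  refine ⟨Pi.single i ((a i)⁻¹ * t), ?_⟩
  show ∑ j, a j * (Pi.single i ((a i)⁻¹ * t) : Fin k → ZMod q) j = t
  rw [sum_single, ← mul_assoc, mul_inv_cancel₀ hi, one_mul]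

lemma single_count [NeZero q] (hq : Nat.Prime q) (hk : 1 ≤ k) {a : Fin k → ZMod q} (ha : a ≠ 0) :
    (Finset.univ.filter fun g : Fin k → ZMod q => ∑ j, a j * g j = 0).card = q ^ (k - 1) := by
  haveI := Fact.mk hq
  have h := fiber_count (lform a) (lform_surj ha)
  rw [Fintype.card_fun, ZMod.card, Fintype.card_fin] at h
  have hfe : (Finset.univ.filter fun g : Fin k → ZMod q => ∑ j, a j * g j = 0)
      = (Finset.univ.filter fun g => lform a g = 0) :=
    Finset.filter_congr (fun g _ => by rw [lform_apply])
  have h2 : (Finset.univ.filter fun g : Fin k → ZMod q => ∑ j, a j * g j = 0).card * q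
      = q ^ (k - 1) * q := by
    rw [hfe, h, ← pow_succ, Nat.sub_add_cancel hk]
  exact Nat.eq_of_mul_eq_mul_right hq.pos h2

lemma pair_surj_s17 [Fact (Nat.Prime q)] {a b : Fin k → ZMod q} (ha : a ≠ 0)
    (hba : ∀ c : ZMod q, b ≠ c • a) :
    2 ≤ k ∧ Function.Surjective ((lform a).prod (lform b)) := by
  have hm : ∃ i j, a i * b j ≠ a j * b i := by
    by_contra hcon
    push_neg at hcon
    obtain ⟨i, hi⟩ := Function.ne_iff.mp ha
    rw [Pi.zero_apply] at hi
    apply hba (b i * (a i)⁻¹)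
    funext j
    have h2 : a i * b j = a j * b i := hcon i j
    rw [Pi.smul_apply, smul_eq_mul]
    field_simp
    linear_combination h2
  obtain ⟨i, j, hij⟩ := hm
  have hne : i ≠ j := fun h => hij (by rw [h])
  refine ⟨?_, ?_⟩
  · have : 1 < Fintype.card (Fin k) := Fintype.one_lt_card_iff_nontrivial.mpr ⟨⟨i, j, hne⟩⟩
    exact Nat.succ_le_of_lt (by simpa using this)
  rintro ⟨s, t⟩
  set D := a i * b j - a j * b i with hD
  have hD0 : D ≠ 0 := sub_ne_zero.mpr hij
  refine ⟨Pi.single i (D⁻¹ * (s * b j - t * a j)) + Pi.single j (D⁻¹ * (t * a i - s * b i)), ?_⟩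
  have key : ∀ (c : Fin k → ZMod q) (u v : ZMod q),
      lform c ((Pi.single i u : Fin k → ZMod q) + Pi.single j v) = c i * u + c j * v := by
    intro c u v
    rw [lform_apply]
    simp only [Pi.add_apply, mul_add, Finset.sum_add_distrib, sum_single]
  rw [AddMonoidHom.prod_apply, Prod.mk.injEq]
  constructor <;> rw [key] <;> field_simp <;> ring

lemma pair_count [NeZero q] (hq : Nat.Prime q) {a b : Fin k → ZMod q} (ha : a ≠ 0)
    (hba : ∀ c : ZMod q, b ≠ c • a) :
    2 ≤ k ∧ (Finset.univ.filter fun g : Fin k → ZMod q =>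
      (∑ j, a j * g j = 0) ∧ (∑ j, b j * g j = 0)).card = q ^ (k - 2) := by
  haveI := Fact.mk hq
  obtain ⟨hk2, hs⟩ := pair_surj_s17 ha hba
  refine ⟨hk2, ?_⟩
  have h := fiber_count ((lform a).prod (lform b)) hs
  rw [Fintype.card_fun, ZMod.card, Fintype.card_fin, Fintype.card_prod, ZMod.card] at h
  have hfe : (Finset.univ.filter fun g : Fin k → ZMod q =>
        (∑ j, a j * g j = 0) ∧ (∑ j, b j * g j = 0))
      = (Finset.univ.filter fun g => ((lform a).prod (lform b)) g = 0) :=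
    Finset.filter_congr (fun g _ => by
      simp [AddMonoidHom.prod_apply, Prod.ext_iff, lform_apply])
  have h2 : (Finset.univ.filter fun g : Fin k → ZMod q =>
        (∑ j, a j * g j = 0) ∧ (∑ j, b j * g j = 0)).card * (q * q)
      = q ^ (k - 2) * (q * q) := by
    rw [hfe, h, ← mul_assoc, ← pow_succ, ← pow_succ]
    congr 1
    omega
  exact Nat.eq_of_mul_eq_mul_right (Nat.mul_pos hq.pos hq.pos) h2
end

lemma nat_aux1 {k : ℕ} (h : 2 ≤ k) : k - 1 = k - 2 + 1 := by omega

lemma nat_aux2 {k : ℕ} (h : 2 ≤ k) : k = k - 2 + 2 := by omega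

/-- (Second moment bound) For `q` prime, `k ≥ 1` and a nonempty finite set `I` of nonzero,
pairwise linearly independent vectors `a : Fin k → ZMod q`, the probability over uniform
`g` that some `a ∈ I` satisfies `∑ j, a j * g j = 0` is at least `|I|/(q + |I| - 1)`. -/
theorem second_moment_bound (q k : ℕ) (hq : Nat.Prime q) (hk : 1 ≤ k)
    (I : Finset (Fin k → ZMod q)) (hIne : I.Nonempty)
    (hI0 : ∀ a ∈ I, a ≠ 0)
    (hIindep : ∀ a ∈ I, ∀ b ∈ I, a ≠ b → ∀ c : ZMod q, a ≠ c • b) :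
    (I.card : ℝ) / ((q : ℝ) + (I.card : ℝ) - 1)
      ≤ Pr (Fin k → ZMod q) (fun g => ∃ a ∈ I, ∑ j, a j * g j = 0) := by
  classical
  haveI := Fact.mk hq
  haveI : NeZero q := ⟨hq.ne_zero⟩
  have hq0 : (0:ℝ) < q := by exact_mod_cast hq.pos
  set m := I.card with hm
  set S := Finset.univ.filter (fun g : Fin k → ZMod q => ∃ a ∈ I, ∑ j, a j * g j = 0) with hS
  have hPr : Pr (Fin k → ZMod q) (fun g => ∃ a ∈ I, ∑ j, a j * g j = 0)
      = (S.card : ℝ) / ((q:ℝ) ^ k) := by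
    unfold Pr
    rw [Nat.card_eq_fintype_card, Nat.card_eq_fintype_card, Fintype.card_subtype,
      Fintype.card_fun, ZMod.card, Fintype.card_fin]
    push_cast
    rfl
  rw [hPr]
  have ek1 : (q:ℝ) ^ k = (q:ℝ) ^ (k - 1) * q := by
    rw [← pow_succ]; congr 1; omega
  have T1 : (∑ g : Fin k → ZMod q, (I.filter fun a => ∑ j, a j * g j = 0).card)
      = m * q ^ (k - 1) := by
    simp_rw [Finset.card_filter]
    rw [Finset.sum_comm]
    rw [Finset.sum_congr rfl (fun a ha => by
      rw [← Finset.card_filter, single_count hq hk (hI0 a ha)])]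
    rw [Finset.sum_const, smul_eq_mul]
  rcases eq_or_lt_of_le (Finset.one_le_card.mpr hIne) with h1 | h2
  · -- m = 1
    obtain ⟨a, haI⟩ := Finset.card_eq_one.mp h1.symm
    have ham : a ∈ I := by rw [haI]; exact Finset.mem_singleton_self a
    have hSc : S.card = q ^ (k - 1) := by
      have hSe : S = Finset.univ.filter (fun g : Fin k → ZMod q => ∑ j, a j * g j = 0) := by
        rw [hS]
        exact Finset.filter_congr (fun g _ => by simp [haI])
      rw [hSe, single_count hq hk (hI0 a ham)]
    have hm1 : m = 1 := h1.symm
    rw [hSc, hm1]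
    push_cast
    have e1 : ((q:ℝ) + 1 - 1) = q := by ring
    rw [e1, div_le_div_iff₀ hq0 (by positivity), ek1, one_mul]
  · -- m ≥ 2
    have hm2 : 2 ≤ m := h2
    obtain ⟨a0, ha0I, b0, hb0I, hab0⟩ := Finset.one_lt_card.mp h2
    have hk2 : 2 ≤ k :=
      (pair_count hq (hI0 a0 ha0I) (fun c => hIindep b0 hb0I a0 ha0I (Ne.symm hab0) c)).1
    have T2 : (∑ g : Fin k → ZMod q, ((I.filter fun a => ∑ j, a j * g j = 0).card) ^ 2)
        = m * (q ^ (k - 1) + (m - 1) * q ^ (k - 2)) := by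
      have e1 : ∀ g : Fin k → ZMod q, ((I.filter fun a => ∑ j, a j * g j = 0).card) ^ 2
          = ∑ a ∈ I, ∑ b ∈ I,
            if (∑ j, a j * g j = 0) ∧ (∑ j, b j * g j = 0) then 1 else 0 := by
        intro g
        rw [sq, Finset.card_filter, Finset.sum_mul_sum]
        refine Finset.sum_congr rfl fun a _ => Finset.sum_congr rfl fun b _ => ?_
        by_cases hA : (∑ j, a j * g j = 0) <;> by_cases hB : (∑ j, b j * g j = 0) <;>
          simp [hA, hB]
      have inner : ∀ a ∈ I, (∑ g : Fin k → ZMod q, ∑ b ∈ I,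
          if (∑ j, a j * g j = 0) ∧ (∑ j, b j * g j = 0) then 1 else 0)
          = q ^ (k - 1) + (m - 1) * q ^ (k - 2) := by
        intro a ha
        rw [Finset.sum_comm]
        rw [Finset.sum_congr rfl (fun b (_ : b ∈ I) => (Finset.card_filter _ _).symm)]
        rw [← Finset.add_sum_erase _ _ ha]
        have hda : (Finset.univ.filter fun g : Fin k → ZMod q =>
            (∑ j, a j * g j = 0) ∧ (∑ j, a j * g j = 0)).card = q ^ (k - 1) := by
          rw [Finset.filter_congr (fun g _ => by tauto), single_count hq hk (hI0 a ha)]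
        rw [hda, Finset.sum_congr rfl (fun b hb => (pair_count hq (hI0 a ha)
            (fun c => hIindep b (Finset.mem_of_mem_erase hb) a ha
              (Finset.ne_of_mem_erase hb) c)).2),
          Finset.sum_const, Finset.card_erase_of_mem ha, smul_eq_mul]
      simp_rw [e1]
      rw [Finset.sum_comm]
      rw [Finset.sum_congr rfl inner, Finset.sum_const, smul_eq_mul]
    have hT1S : (∑ g ∈ S, (I.filter fun a => ∑ j, a j * g j = 0).card) = m * q ^ (k - 1) := by
      rw [← T1]
      refine Finset.sum_subset (Finset.subset_univ S) (fun g _ hg => ?_)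
      rw [hS, Finset.mem_filter] at hg
      push_neg at hg
      rw [Finset.card_eq_zero, Finset.filter_eq_empty_iff]
      intro a ha
      exact hg (Finset.mem_univ g) a ha
    have hcast : ((m - 1 : ℕ) : ℝ) = (m:ℝ) - 1 := by
      have h1m : (1:ℕ) ≤ m := le_trans one_le_two hm2
      have h := Nat.cast_sub (R := ℝ) h1m
      simpa using h
    -- Cauchy–Schwarz over S, in ℝ
    have cs : ((m:ℝ) * (q:ℝ) ^ (k - 1)) ^ 2
        ≤ (S.card : ℝ) * ((m:ℝ) * ((q:ℝ) ^ (k - 1) + ((m:ℝ) - 1) * (q:ℝ) ^ (k - 2))) := by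
      have c1 : (∑ g ∈ S, ((I.filter fun a => ∑ j, a j * g j = 0).card : ℝ)) ^ 2
          ≤ (S.card : ℝ) * ∑ g ∈ S, ((I.filter fun a => ∑ j, a j * g j = 0).card : ℝ) ^ 2 :=
        sq_sum_le_card_mul_sum_sq
      have c2 : (∑ g ∈ S, ((I.filter fun a => ∑ j, a j * g j = 0).card : ℝ))
          = (m:ℝ) * (q:ℝ) ^ (k - 1) := by
        exact_mod_cast hT1S
      have c3 : (∑ g ∈ S, ((I.filter fun a => ∑ j, a j * g j = 0).card : ℝ) ^ 2)
          ≤ (m:ℝ) * ((q:ℝ) ^ (k - 1) + ((m:ℝ) - 1) * (q:ℝ) ^ (k - 2)) := by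
        have hsub : (∑ g ∈ S, ((I.filter fun a => ∑ j, a j * g j = 0).card : ℝ) ^ 2)
            ≤ ∑ g : Fin k → ZMod q, ((I.filter fun a => ∑ j, a j * g j = 0).card : ℝ) ^ 2 :=
          Finset.sum_le_sum_of_subset_of_nonneg (Finset.subset_univ S)
            (fun _ _ _ => by positivity)
        refine hsub.trans (le_of_eq ?_)
        rw [← hcast]
        exact_mod_cast T2
      rw [← c2]
      exact c1.trans (mul_le_mul_of_nonneg_left c3 (Nat.cast_nonneg _))
    have hM2 : (2:ℝ) ≤ (m:ℝ) := by exact_mod_cast hm2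
    have hP : (0:ℝ) < (q:ℝ) ^ (k - 2) := pow_pos hq0 _
    have ek2 : (q:ℝ) ^ (k - 1) = (q:ℝ) ^ (k - 2) * q := by
      rw [← pow_succ]; congr 1; exact nat_aux1 hk2
    have ekk : (q:ℝ) ^ k = (q:ℝ) ^ (k - 2) * q ^ 2 := by
      rw [← pow_add]; congr 1; exact nat_aux2 hk2
    rw [div_le_div_iff₀ (by nlinarith) (by positivity), ekk]
    rw [ek2] at cs
    nlinarith [cs, hP, hq0, hM2,
      mul_pos hP (show (0:ℝ) < (m:ℝ) by linarith),
      mul_pos (mul_pos hP hq0) (show (0:ℝ) < (m:ℝ) by linarith)]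
end
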